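/- arXiv:math/0512256 — 8 statements merged into one kernel-verified Lean document; each statement's English description precedes it below -/
import Mathlib

section
/- If w is an infinite binary word whose gap function g is strictly increasing, then the number of distinct subwords of w of length n that contain at most one occurrence of the letter 1 is exactly n+1. -/
/-- `u` occurs in `w` starting at position `i` (positions are 1-indexed). -/
def FactorAt (w : ℕ → Fin 2) (i : ℕ) (u : List (Fin 2)) : Prop :=
  u = (List.range u.length).map (fun k => w (i + k))

/-- `u` is a subword (factor) of the infinite word `w`. -/
def IsFactor (w : ℕ → Fin 2) (u : List (Fin 2)) : Prop :=
  ∃ i, 1 ≤ i ∧ FactorAt w i u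

/-- The subword complexity function of `w`. -/
noncomputable def complexity (w : ℕ → Fin 2) (n : ℕ) : ℕ :=
  Set.ncard {u : List (Fin 2) | u.length = n ∧ IsFactor w u}

/-- `G` is the 1-distribution function of `w`: `G 0 = 0` and `G i` is the
position of the `i`-th `1` of `w` (positions 1-indexed). -/
def OneDistrib (w : ℕ → Fin 2) (G : ℕ → ℕ) : Prop :=
  G 0 = 0 ∧ StrictMono G ∧ ∀ p, 1 ≤ p → (w p = 1 ↔ ∃ i, 1 ≤ i ∧ G i = p)

/-- The gap function associated with a 1-distribution function `G`. -/
def gap (G : ℕ → ℕ) (i : ℕ) : ℕ := G i - G (i - 1)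

/-- The gap function is strictly increasing. -/
def GapIncreasing (G : ℕ → ℕ) : Prop :=
  ∀ i, 1 ≤ i → gap G i < gap G (i + 1)

/-- `u` is a right special factor of `w`. -/
def RightSpecial (w : ℕ → Fin 2) (u : List (Fin 2)) : Prop :=
  IsFactor w (u ++ [0]) ∧ IsFactor w (u ++ [1])

lemma fin2_eq_zero {x : Fin 2} (h : x ≠ 1) : x = 0 := by fin_cases x <;> simp_all

/-- word with single 1 at position k -/
def Wd (k m : ℕ) : List (Fin 2) := List.replicate k 0 ++ 1 :: List.replicate m 0

lemma Wd_length (k m : ℕ) : (Wd k m).length = k + 1 + m := by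
  simp [Wd]; omega

lemma Wd_count (k m : ℕ) : (Wd k m).count 1 = 1 := by
  simp [Wd, List.count_cons, List.count_replicate]

lemma Wd_getElem (k m j : ℕ) (hj : j < (Wd k m).length) :
    (Wd k m)[j] = if j = k then 1 else 0 := by
  simp only [Wd] at hj ⊢
  rw [List.getElem_append]
  rcases lt_trichotomy j k with h | h | h
  · simp [h, Nat.ne_of_lt h]
  · subst h; simp
  · have hk : ¬ j < (List.replicate k (0 : Fin 2)).length := by simp; omega
    rw [dif_neg hk, if_neg (Nat.ne_of_gt h)]
    simp only [List.length_replicate]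
    rw [List.getElem_cons]
    rw [dif_neg (by omega : ¬ j - k = 0), List.getElem_replicate]

lemma char_count_le_one : ∀ (u : List (Fin 2)), u.count 1 ≤ 1 →
    u = List.replicate u.length 0 ∨
    ∃ k, k < u.length ∧ u = Wd k (u.length - 1 - k) := by
  intro u
  induction u with
  | nil => intro _; left; rfl
  | cons a t ih =>
    intro h
    rcases eq_or_ne a 1 with ha | ha
    · subst ha
      have ht : t.count 1 = 0 := by
        simp [List.count_cons] at h; omega
      have htr : t = List.replicate t.length 0 := by
        refine List.eq_replicate_iff.mpr ⟨rfl, fun b hb => ?_⟩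
        exact fin2_eq_zero (fun hb1 => by rw [List.count_eq_zero] at ht; exact ht (hb1 ▸ hb))
      right
      exact ⟨0, by simp, by simp [Wd]; exact htr⟩
    · have ha0 : a = 0 := fin2_eq_zero ha
      subst ha0
      have ht : t.count 1 ≤ 1 := by
        simp [List.count_cons] at h; omega
      rcases ih ht with h1 | ⟨k, hk, hke⟩
      · left
        rw [List.length_cons, List.replicate_succ]
        exact congrArg _ h1
      · right
        refine ⟨k + 1, by simp; omega, ?_⟩
        have hlen : (0 :: t).length - 1 - (k + 1) = t.length - 1 - k := by
          simp only [List.length_cons]; omega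
        rw [hlen, Wd, List.replicate_succ]
        simpa [Wd] using hke

section Facts
variable {w : ℕ → Fin 2} {G : ℕ → ℕ}

lemma G_ge (hG : OneDistrib w G) (i : ℕ) : i ≤ G i := hG.2.1.le_apply

lemma gap_eq (hG : OneDistrib w G) (i : ℕ) (hi : 1 ≤ i) : G i = G (i - 1) + gap G i := by
  have : G (i - 1) < G i := hG.2.1 (by omega)
  rw [gap]; omega

lemma gap_ge (hG : OneDistrib w G) (hg : GapIncreasing G) :
    ∀ k, 1 ≤ k → k ≤ gap G k := by
  intro k hk
  induction k with
  | zero => omega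
  | succ k ih =>
    rcases Nat.eq_or_lt_of_le hk with h | h
    · have h1 : G 1 ≥ 1 := by
        have := hG.2.1 (show (0:ℕ) < 1 by norm_num)
        omega
      have : k = 0 := by omega
      subst this
      simpa [gap, hG.1] using h1
    · have hk1 : 1 ≤ k := by omega
      have := hg k hk1
      have := ih hk1
      omega

lemma w_one (hG : OneDistrib w G) {i : ℕ} (hi : 1 ≤ i) : w (G i) = 1 := by
  have h1 : 1 ≤ G i := le_trans hi (G_ge hG i)
  exact (hG.2.2 _ h1).mpr ⟨i, hi, rfl⟩

lemma w_zero (hG : OneDistrib w G) {p i : ℕ} (hi : 1 ≤ i)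
    (h1 : G (i - 1) < p) (h2 : p < G i) : w p = 0 := by
  refine fin2_eq_zero (fun hw => ?_)
  have hp : 1 ≤ p := by omega
  obtain ⟨j, hj, hjp⟩ := (hG.2.2 p hp).mp hw
  have l1 : i - 1 < j := hG.2.1.lt_iff_lt.mp (by omega)
  have l2 : j < i := hG.2.1.lt_iff_lt.mp (by omega)
  omega

lemma zero_factor (hG : OneDistrib w G) (hg : GapIncreasing G) (n : ℕ) :
    IsFactor w (List.replicate n 0) := by
  have hgap : n + 1 ≤ gap G (n + 1) := gap_ge hG hg (n + 1) (by omega)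
  refine ⟨G n + 1, by omega, ?_⟩
  rw [FactorAt]
  symm
  refine List.eq_replicate_iff.mpr ⟨by simp, fun b hb => ?_⟩
  simp only [List.mem_map, List.mem_range, List.length_replicate] at hb
  obtain ⟨k, hk, rfl⟩ := hb
  refine w_zero hG (i := n + 1) (by omega) (by simp; omega) ?_
  have := gap_eq hG (n + 1) (by omega)
  simp at this
  omega

lemma one_factor (hG : OneDistrib w G) (hg : GapIncreasing G) (k m : ℕ) :
    IsFactor w (Wd k m) := by
  set n := k + 1 + m with hn
  have hg1 : n + 1 ≤ gap G (n + 1) := gap_ge hG hg (n + 1) (by omega)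
  have hg2 : n + 2 ≤ gap G (n + 2) := gap_ge hG hg (n + 2) (by omega)
  have hGe : n + 1 ≤ G (n + 1) := G_ge hG (n + 1)
  have he1 : G (n + 1) = G n + gap G (n + 1) := by simpa using gap_eq hG (n + 1) (by omega)
  have he2 : G (n + 2) = G (n + 1) + gap G (n + 2) := by simpa using gap_eq hG (n + 2) (by omega)
  refine ⟨G (n + 1) - k, by omega, ?_⟩
  rw [FactorAt]
  apply List.ext_getElem (by simp [Wd_length])
  intro j h1 h2
  rw [Wd_getElem]
  rw [List.getElem_map, List.getElem_range]
  rw [Wd_length] at h1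
  have hkG : k ≤ G (n + 1) := by omega
  rcases lt_trichotomy j k with h | h | h
  · rw [if_neg (Nat.ne_of_lt h)]
    refine (w_zero hG (i := n + 1) (by omega) ?_ ?_).symm
    · show G n < G (n + 1) - k + j
      omega
    · omega
  · subst h
    rw [if_pos rfl]
    have : G (n + 1) - j + j = G (n + 1) := by omega
    rw [this]
    exact (w_one hG (by omega)).symm
  · rw [if_neg (Nat.ne_of_gt h)]
    have hp : G (n + 1) - k + j = G (n + 1) + (j - k) := by omega
    rw [hp]
    refine (w_zero hG (i := n + 2) (by omega) ?_ ?_).symm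
    · show G (n + 1) < G (n + 1) + (j - k)
      omega
    · omega
end Facts

lemma Wd_inj {a b ma mb : ℕ} (h : Wd a ma = Wd b mb) (hab : a < (Wd b mb).length) : a = b := by
  by_contra hne
  have h1 : (Wd a ma).getD a 0 = 1 := by
    rw [List.getD_eq_getElem _ _ (by rw [h]; exact hab), Wd_getElem, if_pos rfl]
  rw [h, List.getD_eq_getElem _ _ hab, Wd_getElem, if_neg hne] at h1
  exact absurd h1 (by decide)

theorem stmt0 (w : ℕ → Fin 2) (G : ℕ → ℕ) (hG : OneDistrib w G)
    (hg : GapIncreasing G) (n : ℕ) (hn : 1 ≤ n) :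
    Set.ncard {u : List (Fin 2) | u.length = n ∧ IsFactor w u ∧ u.count 1 ≤ 1} = n + 1 := by
  classical
  set f : ℕ → List (Fin 2) := fun k => if k < n then Wd k (n - 1 - k) else List.replicate n 0
    with hf
  have hfk : ∀ k, k < n → f k = Wd k (n - 1 - k) := fun k hk => by simp [hf, hk]
  have hfn : ∀ k, ¬ k < n → f k = List.replicate n 0 := fun k hk => by simp [hf, hk]
  have hcr : (List.replicate n (0 : Fin 2)).count 1 = 0 := by
    simp [List.count_replicate]
  have hset : {u : List (Fin 2) | u.length = n ∧ IsFactor w u ∧ u.count 1 ≤ 1}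
      = ↑((Finset.range (n + 1)).image f) := by
    ext u
    simp only [Set.mem_setOf_eq, Finset.coe_image, Set.mem_image, Finset.mem_coe,
      Finset.mem_range]
    constructor
    · rintro ⟨hl, _, hc⟩
      rcases char_count_le_one u hc with h1 | ⟨k, hk, hke⟩
      · refine ⟨n, by omega, ?_⟩
        rw [hfn n (by omega), ← hl, ← h1]
      · rw [hl] at hk hke
        refine ⟨k, by omega, ?_⟩
        rw [hfk k hk, ← hke]
    · rintro ⟨k, hk, rfl⟩
      by_cases h : k < n
      · rw [hfk k h]
        exact ⟨by rw [Wd_length]; omega, one_factor hG hg _ _, by rw [Wd_count]⟩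
      · rw [hfn k h]
        exact ⟨by simp, zero_factor hG hg n, by rw [hcr]; omega⟩
  rw [hset, Set.ncard_coe_finset]
  rw [Finset.card_image_of_injOn, Finset.card_range]
  intro a ha b hb hab
  simp only [Finset.coe_range, Set.mem_Iio] at ha hb
  by_cases hA : a < n <;> by_cases hB : b < n
  · rw [hfk a hA, hfk b hB] at hab
    exact Wd_inj hab (by rw [Wd_length]; omega)
  · rw [hfk a hA, hfn b hB] at hab
    have := Wd_count a (n - 1 - a)
    rw [hab, hcr] at this
    omega
  · rw [hfn a hA, hfk b hB] at hab
    have := Wd_count b (n - 1 - b)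
    rw [← hab, hcr] at this
    omega
  · omega
end

section
/- Let w be an infinite binary word with strictly increasing gap function g and 1-distribution function G. If n > g(1), then the number of distinct subwords of w of length n containing at least two 1's equals G(L) + G(L+1) - G(M+1) + n(M - L), where L is the least nonnegative integer with g(L+1) + g(L+2) ≥ n+1, and M is the greatest nonnegative integer with g(M+1) ≤ n-1. If n ≤ g(1), this number is 0. -/
/-- The window of `w` of length `n` starting at position `i`. -/
def window (w : ℕ → Fin 2) (n i : ℕ) : List (Fin 2) :=
  (List.range n).map (fun k => w (i + k))

lemma window_length (w : ℕ → Fin 2) (n i : ℕ) : (window w n i).length = n := by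
  simp [window]

lemma factorAt_window (w : ℕ → Fin 2) (n i : ℕ) : FactorAt w i (window w n i) := by
  simp [FactorAt, window]

lemma factor_window {w : ℕ → Fin 2} {n i : ℕ} {u : List (Fin 2)}
    (hlen : u.length = n) (hfa : FactorAt w i u) : u = window w n i := by
  rw [FactorAt, hlen] at hfa; exact hfa

lemma window_count (w : ℕ → Fin 2) (n i : ℕ) :
    (window w n i).count 1 = ((Finset.range n).filter (fun k => w (i+k) = 1)).card := by
  rw [window, List.count_eq_countP, List.countP_map]
  induction n with
  | zero => simp
  | succ m ih =>
    rw [List.range_succ, List.countP_append, Finset.range_add_one, Finset.filter_insert]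
    by_cases h : w (i + m) = 1 <;>
      simp [h, ih, Finset.card_insert_of_notMem, Finset.mem_range]

lemma window_pt {w : ℕ → Fin 2} {n i j : ℕ} (h : window w n i = window w n j)
    {k : ℕ} (hk : k < n) : w (i + k) = w (j + k) := by
  have h1 := congrArg (fun l : List (Fin 2) => l.getD k 0) h
  simpa [window, List.getD_eq_getElem?_getD, hk] using h1

lemma gap_mono {G : ℕ → ℕ} (hg : GapIncreasing G) :
    ∀ a b, 1 ≤ a → a ≤ b → gap G a ≤ gap G b := by
  intro a b ha hab
  induction b with
  | zero => exact (by omega : False).elim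
  | succ c ih =>
    rcases Nat.lt_succ_iff_lt_or_eq.mp (Nat.lt_succ_of_le hab) with h | h
    · exact (ih (by omega)).trans (le_of_lt (hg c (by omega)))
    · exact h ▸ le_refl _

lemma gap_succ (G : ℕ → ℕ) (a : ℕ) : gap G (a+1) = G (a+1) - G a := by simp [gap]

lemma sum_gap {G : ℕ → ℕ} (hmono : StrictMono G) (hG0 : G 0 = 0) :
    ∀ K, ∑ a ∈ Finset.Icc 1 K, gap G a = G K := by
  intro K
  induction K with
  | zero => simp [hG0]
  | succ c ih =>
    rw [Finset.sum_Icc_succ_top (by omega), ih, gap_succ]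
    have h1 : G c < G (c+1) := hmono (Nat.lt_succ_self c)
    omega

theorem stmt1 (w : ℕ → Fin 2) (G : ℕ → ℕ) (hG : OneDistrib w G)
    (hg : GapIncreasing G) (n : ℕ) :
    (gap G 1 < n →
      ∀ L M : ℕ,
        (n + 1 ≤ gap G (L + 1) + gap G (L + 2) ∧
          ∀ L', n + 1 ≤ gap G (L' + 1) + gap G (L' + 2) → L ≤ L') →
        (gap G (M + 1) ≤ n - 1 ∧ ∀ M', gap G (M' + 1) ≤ n - 1 → M' ≤ M) →
        (Set.ncard {u : List (Fin 2) | u.length = n ∧ IsFactor w u ∧ 2 ≤ u.count 1} : ℤ)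
          = (G L : ℤ) + (G (L + 1) : ℤ) - (G (M + 1) : ℤ) + (n : ℤ) * ((M : ℤ) - (L : ℤ))) ∧
    (n ≤ gap G 1 →
      Set.ncard {u : List (Fin 2) | u.length = n ∧ IsFactor w u ∧ 2 ≤ u.count 1} = 0) := by
  obtain ⟨hG0, hmono, hw⟩ := hG
  have hGle : ∀ {a b : ℕ}, a ≤ b → G a ≤ G b := fun h => hmono.monotone h
  have hgpos : ∀ a, 1 ≤ a → 1 ≤ gap G a := by
    intro a ha
    have := hmono (show a - 1 < a by omega)
    simp only [gap]; omega
  have hGpos : ∀ a, 1 ≤ a → 1 ≤ G a := by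
    intro a ha; have := hmono (show 0 < a by omega); omega
  constructor
  · intro hn L M hLdef hMdef
    obtain ⟨hL1, hL2⟩ := hLdef
    obtain ⟨hM1, hM2⟩ := hMdef
    have hn1 : 1 ≤ n := le_trans (hgpos 1 le_rfl) (le_of_lt hn)
    have haM : ∀ a, a ≤ M → gap G (a+1) ≤ n - 1 := by
      intro a ha
      exact le_trans (gap_mono hg (a+1) (M+1) (by omega) (by omega)) hM1
    have haL2 : ∀ a, L + 1 ≤ a → n + 1 ≤ gap G a + gap G (a+1) := by
      intro a ha
      calc n + 1 ≤ gap G (L+1) + gap G (L+2) := hL1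
        _ ≤ gap G a + gap G (a+1) :=
          Nat.add_le_add (gap_mono hg _ _ (by omega) (by omega))
            (gap_mono hg _ _ (by omega) (by omega))
    have haL : ∀ a, 1 ≤ a → a ≤ L → gap G a + gap G (a+1) ≤ n := by
      intro a ha haL'
      by_contra hc
      have h1 : n + 1 ≤ gap G ((a-1)+1) + gap G ((a-1)+2) := by
        have e1 : a - 1 + 1 = a := by omega
        have e2 : a - 1 + 2 = a + 1 := by omega
        rw [e1, e2]; omega
      have := hL2 (a-1) h1
      omega
    have hLM : L ≤ M := by
      have h2 : ¬ gap G (M+2) ≤ n - 1 := fun h => by have := hM2 (M+1) h; omega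
      exact hL2 M (by have := hgpos (M+1) (by omega); omega)
    set f : (Σ _ : ℕ, ℕ) → List (Fin 2) := fun p => window w n p.2 with hfdef
    set S : Finset (Σ _ : ℕ, ℕ) :=
      (Finset.Icc 1 M).sigma
        (fun a => Finset.Icc (max (G (a-1) + 1) (G (a+1) + 1 - n)) (G a)) with hSdef
    have hmemS : ∀ a i : ℕ, ((⟨a, i⟩ : Σ _ : ℕ, ℕ) ∈ S ↔
        (1 ≤ a ∧ a ≤ M ∧ G (a-1) < i ∧ i ≤ G a ∧ G (a+1) + 1 ≤ i + n)) := by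
      intro a i
      rw [hSdef]
      simp only [Finset.mem_sigma, Finset.mem_Icc, max_le_iff]
      omega
    have hwin : ∀ a i k : ℕ, 1 ≤ a → G (a-1) < i →
        (w (i+k) = 1 ↔ ∃ b, a ≤ b ∧ G b = i + k) := by
      intro a i k ha hi
      rw [hw (i+k) (by omega)]
      constructor
      · rintro ⟨b, hb1, hbe⟩
        refine ⟨b, ?_, hbe⟩
        by_contra hba
        have : G b ≤ G (a-1) := hGle (by omega)
        omega
      · rintro ⟨b, hb1, hbe⟩; exact ⟨b, by omega, hbe⟩
    have hset : {u : List (Fin 2) | u.length = n ∧ IsFactor w u ∧ 2 ≤ u.count 1}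
        = ↑(S.image f) := by
      ext u
      simp only [Set.mem_setOf_eq, Finset.coe_image, Set.mem_image, Finset.mem_coe]
      constructor
      · rintro ⟨hlen, ⟨i, hi1, hfa⟩, hcnt⟩
        have hu : u = window w n i := factor_window hlen hfa
        rw [hu, window_count] at hcnt
        obtain ⟨k1, hk1, k2, hk2, hne⟩ := Finset.one_lt_card.mp hcnt
        have main : ∀ k1 k2 : ℕ,
            k1 ∈ (Finset.range n).filter (fun k => w (i+k) = 1) →
            k2 ∈ (Finset.range n).filter (fun k => w (i+k) = 1) → k1 < k2 →
            ∃ p, p ∈ S ∧ f p = u := by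
          intro k1 k2 hk1 hk2 hlt
          simp only [Finset.mem_filter, Finset.mem_range] at hk1 hk2
          obtain ⟨b1, hb11, hb1e⟩ := (hw (i+k1) (by omega)).mp hk1.2
          obtain ⟨b2, hb21, hb2e⟩ := (hw (i+k2) (by omega)).mp hk2.2
          have hb12 : b1 < b2 := hmono.lt_iff_lt.mp (by omega)
          have hex : ∃ b, i ≤ G b := ⟨b1, by omega⟩
          set a := Nat.find hex with hadef
          have hai : i ≤ G a := Nat.find_spec hex
          have hab1 : a ≤ b1 := Nat.find_le (by omega)
          have ha1 : 1 ≤ a := by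
            rcases Nat.eq_zero_or_pos a with h | h
            · rw [h] at hai; omega
            · exact h
          have hai2 : G (a-1) < i := by
            have := Nat.find_min hex (show a - 1 < a by omega)
            omega
          have hGab1 : G a ≤ i + k1 := by have := hGle hab1; omega
          have hGa1 : G (a+1) ≤ i + k2 := by
            have h3 : a + 1 ≤ b2 := by omega
            have := hGle h3; omega
          have haM' : a ≤ M := by
            apply hM2
            rw [gap_succ]; omega
          refine ⟨⟨a, i⟩, ?_, ?_⟩
          · rw [hmemS]; omega
          · exact hu.symm
        rcases hne.lt_or_gt with h | h
        · exact main k1 k2 hk1 hk2 h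
        · exact main k2 k1 hk2 hk1 h
      · rintro ⟨⟨a, i⟩, hpS, rfl⟩
        rw [hmemS] at hpS
        obtain ⟨ha1, haM', hia, hia2, hia3⟩ := hpS
        have hGaa : G a < G (a+1) := hmono (by omega)
        refine ⟨window_length w n i, ⟨i, by omega, factorAt_window w n i⟩, ?_⟩
        show 2 ≤ (window w n i).count 1
        rw [window_count]
        apply Finset.one_lt_card.mpr
        refine ⟨G a - i, ?_, G (a+1) - i, ?_, by omega⟩
        · simp only [Finset.mem_filter, Finset.mem_range]
          constructor
          · have hgap := haM a haM'
            rw [gap_succ] at hgap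
            omega
          · have e : i + (G a - i) = G a := by omega
            rw [e]
            exact (hw (G a) (hGpos a ha1)).mpr ⟨a, ha1, rfl⟩
        · simp only [Finset.mem_filter, Finset.mem_range]
          constructor
          · omega
          · have e : i + (G (a+1) - i) = G (a+1) := by omega
            rw [e]
            exact (hw (G (a+1)) (hGpos (a+1) (by omega))).mpr ⟨a+1, by omega, rfl⟩
    have hinj : Set.InjOn f ↑S := by
      rintro ⟨a, i⟩ hp ⟨a', i'⟩ hq heq
      rw [Finset.mem_coe, hmemS] at hp hq
      obtain ⟨ha1, haM', hia, hia2, hia3⟩ := hp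
      obtain ⟨ha1', haM'', hia', hia2', hia3'⟩ := hq
      have heq' : window w n i = window w n i' := heq
      have hGaa : G a < G (a+1) := hmono (by omega)
      have hGaa' : G a' < G (a'+1) := hmono (by omega)
      have hpt : ∀ k, k < n → w (i + k) = w (i' + k) := fun k hk => window_pt heq' hk
      have hgapa := haM a haM'
      have hgapa' := haM a' haM''
      rw [gap_succ] at hgapa hgapa'
      have h1 : G a - i = G a' - i' := by
        have e : i + (G a - i) = G a := by omega
        have w1 : w (i + (G a - i)) = 1 := by
          rw [e]; exact (hw (G a) (hGpos a ha1)).mpr ⟨a, ha1, rfl⟩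
        have w1' : w (i' + (G a - i)) = 1 := by rw [← hpt _ (by omega)]; exact w1
        obtain ⟨b, hb, hbe⟩ := (hwin a' i' (G a - i) ha1' hia').mp w1'
        have hx : G a' ≤ i' + (G a - i) := by have := hGle hb; omega
        have e' : i' + (G a' - i') = G a' := by omega
        have w2 : w (i' + (G a' - i')) = 1 := by
          rw [e']; exact (hw (G a') (hGpos a' ha1')).mpr ⟨a', ha1', rfl⟩
        have w2' : w (i + (G a' - i')) = 1 := by rw [hpt _ (by omega)]; exact w2
        obtain ⟨c, hc, hce⟩ := (hwin a i (G a' - i') ha1 hia).mp w2'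
        have hy : G a ≤ i + (G a' - i') := by have := hGle hc; omega
        omega
      have h2 : G (a+1) - i = G (a'+1) - i' := by
        have e : i + (G (a+1) - i) = G (a+1) := by omega
        have w1 : w (i + (G (a+1) - i)) = 1 := by
          rw [e]; exact (hw (G (a+1)) (hGpos (a+1) (by omega))).mpr ⟨a+1, by omega, rfl⟩
        have w1' : w (i' + (G (a+1) - i)) = 1 := by rw [← hpt _ (by omega)]; exact w1
        obtain ⟨b, hb, hbe⟩ := (hwin a' i' (G (a+1) - i) ha1' hia').mp w1'
        have hbgt : a' + 1 ≤ b := by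
          by_contra hcc
          have := hGle (show b ≤ a' by omega)
          omega
        have hx : G (a'+1) ≤ i' + (G (a+1) - i) := by have := hGle hbgt; omega
        have e' : i' + (G (a'+1) - i') = G (a'+1) := by omega
        have w2 : w (i' + (G (a'+1) - i')) = 1 := by
          rw [e']
          exact (hw (G (a'+1)) (hGpos (a'+1) (by omega))).mpr ⟨a'+1, by omega, rfl⟩
        have w2' : w (i + (G (a'+1) - i')) = 1 := by rw [hpt _ (by omega)]; exact w2
        obtain ⟨c, hc, hce⟩ := (hwin a i (G (a'+1) - i') ha1 hia).mp w2'
        have hcgt : a + 1 ≤ c := by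
          by_contra hcc
          have := hGle (show c ≤ a by omega)
          omega
        have hy : G (a+1) ≤ i + (G (a'+1) - i') := by have := hGle hcgt; omega
        omega
      have hgeq : gap G (a+1) = gap G (a'+1) := by
        rw [gap_succ, gap_succ]; omega
      have haa : a = a' := by
        rcases Nat.lt_trichotomy a a' with h | h | h
        · have h1' : gap G (a+1) ≤ gap G a' := gap_mono hg (a+1) a' (by omega) (by omega)
          have h2' : gap G a' < gap G (a'+1) := hg a' (by omega)
          omega
        · exact h
        · have h1' : gap G (a'+1) ≤ gap G a := gap_mono hg (a'+1) a (by omega) (by omega)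
          have h2' : gap G a < gap G (a+1) := hg a (by omega)
          omega
      subst haa
      have hii : i = i' := by omega
      subst hii
      rfl
    have hfin : Set.ncard {u : List (Fin 2) | u.length = n ∧ IsFactor w u ∧ 2 ≤ u.count 1}
        = ∑ a ∈ Finset.Icc 1 M, min (gap G a) (n - gap G (a+1)) := by
      rw [hset, Set.ncard_coe_finset, Finset.card_image_of_injOn hinj, hSdef,
        Finset.card_sigma]
      apply Finset.sum_congr rfl
      intro a ha
      rw [Finset.mem_Icc] at ha
      rw [Nat.card_Icc]
      have h1 : G (a-1) < G a := hmono (by omega)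
      have h2 : G a < G (a+1) := hmono (by omega)
      have h3 := haM a ha.2
      have hga : gap G a = G a - G (a-1) := rfl
      have hga1 : gap G (a+1) = G (a+1) - G a := gap_succ G a
      omega
    have hsum : ∀ d, L + d ≤ M →
        ((∑ a ∈ Finset.Icc 1 (L+d), min (gap G a) (n - gap G (a+1)) : ℕ) : ℤ)
          = (G L : ℤ) + G (L+1) - G (L+d+1) + n * d := by
      intro d
      induction d with
      | zero =>
        intro _
        simp only [Nat.add_zero]
        have hc : ∀ a ∈ Finset.Icc 1 L, min (gap G a) (n - gap G (a+1)) = gap G a := by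
          intro a ha; rw [Finset.mem_Icc] at ha
          have := haL a ha.1 ha.2
          omega
        rw [Finset.sum_congr rfl hc, sum_gap hmono hG0]
        push_cast
        ring
      | succ c ih =>
        intro hle
        have hc := ih (by omega)
        rw [show L + (c+1) = (L+c) + 1 from rfl, Finset.sum_Icc_succ_top (by omega),
          Nat.cast_add, hc]
        have hmin : min (gap G (L+c+1)) (n - gap G (L+c+2)) = n - gap G (L+c+2) := by
          have h6 := haL2 (L+c+1) (by omega)
          rw [show L+c+1+1 = L+c+2 by omega] at h6
          omega
        rw [hmin]
        have h3 : gap G (L+c+2) ≤ n - 1 := haM (L+c+1) (by omega)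
        have h4 : G (L+c+1) < G (L+c+2) := hmono (by omega)
        have h5 : gap G (L+c+2) = G (L+c+2) - G (L+c+1) := gap_succ G (L+c+1)
        have hcast : ((n - gap G (L+c+2) : ℕ) : ℤ) = (n:ℤ) - G (L+c+2) + G (L+c+1) := by
          omega
        rw [hcast]
        push_cast
        ring
    obtain ⟨d, hd⟩ : ∃ d, M = L + d := ⟨M - L, by omega⟩
    subst hd
    rw [hfin, hsum d (by omega)]
    push_cast
    ring
  · intro hn
    have hset0 : {u : List (Fin 2) | u.length = n ∧ IsFactor w u ∧ 2 ≤ u.count 1} = ∅ := by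
      ext u
      simp only [Set.mem_setOf_eq, Set.mem_empty_iff_false, iff_false, not_and]
      rintro hlen ⟨i, hi1, hfa⟩ hcnt
      have hu : u = window w n i := factor_window hlen hfa
      rw [hu, window_count] at hcnt
      obtain ⟨k1, hk1, k2, hk2, hne⟩ := Finset.one_lt_card.mp hcnt
      have main : ∀ k1 k2 : ℕ,
          k1 ∈ (Finset.range n).filter (fun k => w (i+k) = 1) →
          k2 ∈ (Finset.range n).filter (fun k => w (i+k) = 1) → k1 < k2 → False := by
        intro k1 k2 hk1 hk2 hlt
        simp only [Finset.mem_filter, Finset.mem_range] at hk1 hk2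
        obtain ⟨b1, hb11, hb1e⟩ := (hw (i+k1) (by omega)).mp hk1.2
        obtain ⟨b2, hb21, hb2e⟩ := (hw (i+k2) (by omega)).mp hk2.2
        have hb12 : b1 < b2 := hmono.lt_iff_lt.mp (by omega)
        have hgb : G b1 ≤ G (b2 - 1) := hGle (by omega)
        have hgap : gap G b2 = G b2 - G (b2 - 1) := rfl
        have h2b : gap G 2 ≤ gap G b2 := gap_mono hg 2 b2 (by omega) (by omega)
        have h12 : gap G 1 < gap G 2 := hg 1 le_rfl
        omega
      rcases hne.lt_or_gt with h | h
      · exact main k1 k2 hk1 hk2 h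
      · exact main k2 k1 hk2 hk1 h
    rw [hset0, Set.ncard_empty]
end

section
/- Let w be an infinite binary word with strictly increasing gap function g and 1-distribution function G. If n ≤ g(1), then the subword complexity satisfies f_w(n) = n+1. If n > g(1), then f_w(n) = G(L_n) + G(L_n+1) - G(M_n+1) + n(M_n - L_n) + n + 1, where L_n is the least nonnegative integer with g(L_n+1) + g(L_n+2) ≥ n+1 and M_n is the greatest nonnegative integer with g(M_n+1) ≤ n-1. -/
namespace Stmt2Aux

def wordAt (w : ℕ → Fin 2) (i n : ℕ) : List (Fin 2) :=
  (List.range n).map (fun k => w (i + k))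

lemma wordAt_length (w : ℕ → Fin 2) (i n : ℕ) : (wordAt w i n).length = n := by
  simp [wordAt]

lemma wordAt_eq_iff (w : ℕ → Fin 2) (i j n : ℕ) :
    wordAt w i n = wordAt w j n ↔ ∀ k < n, w (i + k) = w (j + k) := by
  simp [wordAt, List.map_eq_map_iff]

lemma factorSet_eq (w : ℕ → Fin 2) (n : ℕ) :
    {u : List (Fin 2) | u.length = n ∧ IsFactor w u}
      = {u | ∃ i, 1 ≤ i ∧ u = wordAt w i n} := by
  ext u
  simp only [Set.mem_setOf_eq, IsFactor, FactorAt]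
  constructor
  · rintro ⟨hl, i, hi, hu⟩
    exact ⟨i, hi, by rw [hu, hl]; rfl⟩
  · rintro ⟨i, hi, rfl⟩
    exact ⟨wordAt_length w i n, i, hi, by rw [wordAt_length]; rfl⟩

lemma fin2_zero_iff (x : Fin 2) : x = 0 ↔ ¬ x = 1 := by
  revert x; decide

section basic
variable {w : ℕ → Fin 2} {G : ℕ → ℕ}

lemma G_succ (hG : OneDistrib w G) (a : ℕ) : G (a + 1) = G a + gap G (a + 1) := by
  have h := (hG.2.1 (lt_add_one a)).le
  unfold gap
  simp only [Nat.add_sub_cancel]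
  omega

lemma gap_succ_pos (hG : OneDistrib w G) (a : ℕ) : 1 ≤ gap G (a + 1) := by
  have h := hG.2.1 (lt_add_one a)
  unfold gap
  simp only [Nat.add_sub_cancel]
  omega

lemma gap_pos (hG : OneDistrib w G) (a : ℕ) (ha : 1 ≤ a) : 1 ≤ gap G a := by
  obtain ⟨b, rfl⟩ := Nat.exists_eq_add_of_le ha
  simpa [Nat.add_comm] using gap_succ_pos hG b

lemma gap_mono (hG : OneDistrib w G) (hg : GapIncreasing G) {a b : ℕ}
    (ha : 1 ≤ a) (hab : a ≤ b) : gap G a ≤ gap G b := by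
  induction b with
  | zero => omega
  | succ m ih =>
    rcases Nat.lt_or_ge a (m + 1) with h | h
    · have hm : 1 ≤ m := by omega
      exact le_trans (ih (by omega)) (hg m hm).le
    · have : a = m + 1 := by omega
      subst this; rfl

lemma gap_ge_self (hG : OneDistrib w G) (hg : GapIncreasing G) (a : ℕ) (ha : 1 ≤ a) :
    a ≤ gap G a := by
  induction a with
  | zero => omega
  | succ m ih =>
    rcases Nat.eq_zero_or_pos m with h | h
    · subst h; exact gap_pos hG 1 le_rfl
    · have := hg m h
      have := ih h
      omega

lemma gap_le_G (hG : OneDistrib w G) (a : ℕ) : gap G a ≤ G a := Nat.sub_le _ _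

lemma gap_inj (hG : OneDistrib w G) (hg : GapIncreasing G) {a b : ℕ}
    (ha : 1 ≤ a) (hb : 1 ≤ b) (h : gap G a = gap G b) : a = b := by
  rcases lt_trichotomy a b with hlt | he | hlt
  · have h1 := gap_mono hG hg (by omega : 1 ≤ a + 1) hlt
    have h2 := hg a ha
    omega
  · exact he
  · have h1 := gap_mono hG hg (by omega : 1 ≤ b + 1) hlt
    have h2 := hg b hb
    omega

lemma one_iff (hG : OneDistrib w G) {p : ℕ} (hp : 1 ≤ p) :
    w p = 1 ↔ ∃ j, 1 ≤ j ∧ G j = p := hG.2.2 p hp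

lemma zero_iff (hG : OneDistrib w G) {p : ℕ} (hp : 1 ≤ p) :
    w p = 0 ↔ ¬ ∃ j, 1 ≤ j ∧ G j = p := by
  rw [fin2_zero_iff, one_iff hG hp]

end basic

/-! ### code set and positions -/

def pos (G : ℕ → ℕ) (n : ℕ) (c : ℕ × ℕ) : ℕ :=
  if c.1 = 0 then (if c.2 = n then G n + 1 else G n - c.2) else G c.1 - c.2

def codes (G : ℕ → ℕ) (n M : ℕ) : Finset (ℕ × ℕ) :=
  ({0} ×ˢ Finset.range (n + 1)) ∪
    (Finset.Icc 1 M).biUnion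
      (fun a => {a} ×ˢ Finset.range (min (gap G a) (n - gap G (a + 1))))

lemma mem_codes {G : ℕ → ℕ} {n M : ℕ} {c : ℕ × ℕ} :
    c ∈ codes G n M ↔
      (c.1 = 0 ∧ c.2 < n + 1) ∨
        (1 ≤ c.1 ∧ c.1 ≤ M ∧ c.2 < gap G c.1 ∧ c.2 < n - gap G (c.1 + 1)) := by
  rcases c with ⟨a, r⟩
  simp only [codes, Finset.mem_union, Finset.mem_biUnion, Finset.mem_product,
    Finset.mem_singleton, Finset.mem_range, Finset.mem_Icc]
  constructor
  · rintro (⟨h1, h2⟩ | ⟨b, ⟨hb1, hb2⟩, h1, h2⟩)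
    · exact Or.inl ⟨h1, h2⟩
    · subst h1; exact Or.inr ⟨hb1, hb2, by omega, by omega⟩
  · rintro (⟨h1, h2⟩ | ⟨h1, h2, h3, h4⟩)
    · exact Or.inl ⟨h1, h2⟩
    · exact Or.inr ⟨a, ⟨h1, h2⟩, rfl, by omega⟩

lemma codes_card (G : ℕ → ℕ) (n M : ℕ) :
    (codes G n M).card
      = (n + 1) + ∑ a ∈ Finset.Icc 1 M, min (gap G a) (n - gap G (a + 1)) := by
  rw [codes, Finset.card_union_of_disjoint, Finset.card_biUnion]
  · simp
  · intro x hx y hy hxy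
    simp only [Finset.disjoint_left, Finset.mem_product, Finset.mem_singleton]
    rintro ⟨a, r⟩ ⟨h1, _⟩ ⟨h2, _⟩
    exact hxy ((show a = x from h1).symm.trans (show a = y from h2))
  · simp only [Finset.disjoint_left, Finset.mem_product, Finset.mem_singleton,
      Finset.mem_biUnion, Finset.mem_Icc]
    rintro ⟨a, r⟩ ⟨h1, _⟩ ⟨b, ⟨hb1, _⟩, h2, _⟩
    simp only at h1 h2
    omega

section spec
variable {w : ℕ → Fin 2} {G : ℕ → ℕ}

/-- the all-zero window -/
lemma specZ (hG : OneDistrib w G) (hg : GapIncreasing G) (n : ℕ) (hn : 1 ≤ n)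
    {k : ℕ} (hk : k < n) : w (G n + 1 + k) = 0 := by
  rw [Stmt2Aux.zero_iff hG (by omega)]
  rintro ⟨j, hj1, hj2⟩
  have hmono := hG.2.1
  rcases Nat.lt_or_ge j (n + 1) with h | h
  · have : G j ≤ G n := by
      rcases Nat.lt_or_ge j n with h' | h'
      · exact (hmono h').le
      · have : j = n := by omega
        subst this; rfl
    omega
  · have h1 : G (n + 1) ≤ G j := by
      rcases Nat.lt_or_ge (n+1) j with h' | h'
      · exact (hmono h').le
      · have : j = n + 1 := by omega
        subst this; rfl
    have h2 := Stmt2Aux.G_succ hG n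
    have h3 := Stmt2Aux.gap_ge_self hG hg (n + 1) (by omega)
    omega

/-- the single-one window: one exactly at offset `r` -/
lemma specS (hG : OneDistrib w G) (hg : GapIncreasing G) (n : ℕ) (hn : 1 ≤ n)
    {r : ℕ} (hr : r < n) {k : ℕ} (hk : k < n) :
    w (G n - r + k) = 1 ↔ k = r := by
  have hmono := hG.2.1
  have hgn : n ≤ gap G n := Stmt2Aux.gap_ge_self hG hg n hn
  have hGn : n ≤ G n := le_trans hgn (Stmt2Aux.gap_le_G hG n)
  have hi : 1 ≤ G n - r := by omega
  rw [Stmt2Aux.one_iff hG (by omega)]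
  constructor
  · rintro ⟨j, hj1, hj2⟩
    rcases Nat.lt_or_ge j n with h | h
    · -- j ≤ n - 1 : G j ≤ G n - gap G n
      obtain ⟨m, rfl⟩ : ∃ m, n = m + 1 := ⟨n - 1, by omega⟩
      have h1 : G j ≤ G m := by
        rcases Nat.lt_or_ge j m with h' | h'
        · exact (hmono h').le
        · have : j = m := by omega
          subst this; rfl
      have h2 := Stmt2Aux.G_succ hG m
      omega
    rcases Nat.lt_or_ge n j with h' | h'
    · have h1 : G (n + 1) ≤ G j := by
        rcases Nat.lt_or_ge (n + 1) j with h'' | h''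
        · exact (hmono h'').le
        · have : j = n + 1 := by omega
          subst this; rfl
      have h2 := Stmt2Aux.G_succ hG n
      have h3 := Stmt2Aux.gap_ge_self hG hg (n + 1) (by omega)
      omega
    · have : j = n := by omega
      subst this
      omega
  · rintro rfl
    exact ⟨n, hn, by omega⟩

/-- the two-one window at `G a - r` : description of ones up to offset `r + gap G (a+1)` -/
lemma specP (hG : OneDistrib w G) (hg : GapIncreasing G)
    {a r : ℕ} (ha : 1 ≤ a) (hr : r < gap G a) :
    (∀ k < r, w (G a - r + k) = 0) ∧ w (G a - r + r) = 1 ∧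
      (∀ k, r < k → k < r + gap G (a + 1) → w (G a - r + k) = 0) ∧
      w (G a - r + (r + gap G (a + 1))) = 1 := by
  have hmono := hG.2.1
  have hga : gap G a ≤ G a := Stmt2Aux.gap_le_G hG a
  have hi : 1 ≤ G a - r := by omega
  obtain ⟨b, rfl⟩ : ∃ b, a = b + 1 := ⟨a - 1, by omega⟩
  have hb : G (b + 1) = G b + gap G (b + 1) := Stmt2Aux.G_succ hG b
  have hb2 : G (b + 2) = G (b + 1) + gap G (b + 2) := Stmt2Aux.G_succ hG (b + 1)
  have hnorm : gap G (b + 1 + 1) = gap G (b + 2) := rfl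
  -- helper: for j ≤ b, G j ≤ G b ; for j ≥ b+2, G j ≥ G (b+2)
  have hle : ∀ j, j ≤ b → G j ≤ G b := fun j hj => by
    rcases Nat.lt_or_ge j b with h | h
    · exact (hmono h).le
    · have : j = b := by omega
      subst this; rfl
  have hge : ∀ j, b + 2 ≤ j → G (b + 2) ≤ G j := fun j hj => by
    rcases Nat.lt_or_ge (b + 2) j with h | h
    · exact (hmono h).le
    · have : j = b + 2 := by omega
      subst this; rfl
  refine ⟨?_, ?_, ?_, ?_⟩
  · intro k hk
    rw [Stmt2Aux.zero_iff hG (by omega)]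
    rintro ⟨j, hj1, hj2⟩
    rcases Nat.lt_or_ge b j with h | h
    · have h1 : G (b + 1) ≤ G j := by
        rcases Nat.lt_or_ge (b + 1) j with h'' | h''
        · exact (hmono h'').le
        · have : j = b + 1 := by omega
          subst this; rfl
      omega
    · have := hle j h; omega
  · rw [Stmt2Aux.one_iff hG (by omega)]
    exact ⟨b + 1, by omega, by omega⟩
  · intro k hk1 hk2
    rw [Stmt2Aux.zero_iff hG (by omega)]
    rintro ⟨j, hj1, hj2⟩
    rcases Nat.lt_or_ge (b + 1) j with h | h
    · have := hge j (by omega); omega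
    · have : G j ≤ G (b + 1) := by
        rcases Nat.lt_or_ge j (b + 1) with h'' | h''
        · exact (hmono h'').le
        · have : j = b + 1 := by omega
          subst this; rfl
      omega
  · rw [Stmt2Aux.one_iff hG (by omega)]
    exact ⟨b + 2, by omega, by omega⟩

end spec

section main
variable {w : ℕ → Fin 2} {G : ℕ → ℕ}

lemma fin2_ne (p q : ℕ) (h0 : w p = 0) (h1 : w q = 1) (hpq : w p = w q) : False := by
  rw [h0, h1] at hpq; exact absurd hpq (by decide)

lemma pos_P {G : ℕ → ℕ} {n a r : ℕ} (ha : 1 ≤ a) : pos G n (a, r) = G a - r := by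
  have h : ¬ (a = 0) := by omega
  simp [pos, h]

lemma pos_S {G : ℕ → ℕ} {n r : ℕ} (hr : r < n) : pos G n (0, r) = G n - r := by
  have h : ¬ (r = n) := by omega
  simp [pos, h]

lemma pos_Z {G : ℕ → ℕ} {n : ℕ} : pos G n (0, n) = G n + 1 := by
  simp [pos]

lemma inj (hG : OneDistrib w G) (hg : GapIncreasing G) (n M : ℕ) (hn : 1 ≤ n) :
    Set.InjOn (fun c => wordAt w (pos G n c) n) ↑(codes G n M) := by
  rintro ⟨a, r⟩ hc ⟨a', r'⟩ hc' heq
  simp only [Finset.mem_coe, mem_codes] at hc hc'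
  simp only [wordAt_eq_iff] at heq
  rcases hc with ⟨ha0, hr⟩ | ⟨ha1, haM, hra, hrn⟩ <;>
    rcases hc' with ⟨ha0', hr'⟩ | ⟨ha1', haM', hra', hrn'⟩
  · -- both first coord 0
    subst ha0; subst ha0'
    by_cases h1 : r = n <;> by_cases h2 : r' = n
    · rw [h1, h2]
    · exfalso
      rw [h1] at heq
      have e := heq r' (by omega)
      rw [pos_Z, pos_S (show r' < n by omega)] at e
      exact fin2_ne _ _ (specZ hG hg n hn (by omega))
        ((specS hG hg n hn (show r' < n by omega) (k := r') (by omega)).mpr rfl) e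
    · exfalso
      rw [h2] at heq
      have e := heq r (by omega)
      rw [pos_Z, pos_S (show r < n by omega)] at e
      exact fin2_ne _ _ (specZ hG hg n hn (by omega))
        ((specS hG hg n hn (show r < n by omega) (k := r) (by omega)).mpr rfl) e.symm
    · -- both S
      have hrn0 : r < n := by omega
      have hrn0' : r' < n := by omega
      have e := heq r (by omega)
      rw [pos_S hrn0, pos_S hrn0'] at e
      have hr1 : w (G n - r' + r) = 1 := by
        rw [← e]
        exact (specS hG hg n hn hrn0 (k := r) (by omega)).mpr rfl
      have := (specS hG hg n hn hrn0' (k := r) (by omega)).mp hr1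
      rw [this]
  · -- c is Z or S, c' is P
    exfalso
    subst ha0
    obtain ⟨hP1, hP2, hP3, hP4⟩ := specP hG hg ha1' hra'
    have hsn' : r' + gap G (a' + 1) < n := by omega
    by_cases h1 : r = n
    · rw [h1] at heq
      have e := heq r' (by omega)
      rw [pos_Z, pos_P ha1'] at e
      exact fin2_ne _ _ (specZ hG hg n hn (by omega)) hP2 e
    · have hrn0 : r < n := by omega
      have e1 := heq (r' + gap G (a' + 1)) (by omega)
      have e2 := heq r' (by omega)
      rw [pos_S hrn0, pos_P ha1'] at e1 e2
      have k1 := (specS hG hg n hn hrn0 (k := r' + gap G (a' + 1)) (by omega)).mp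
        (by rw [e1]; exact hP4)
      have k2 := (specS hG hg n hn hrn0 (k := r') (by omega)).mp (by rw [e2]; exact hP2)
      have := gap_succ_pos hG a'
      omega
  · -- c is P, c' is Z or S
    exfalso
    subst ha0'
    obtain ⟨hP1, hP2, hP3, hP4⟩ := specP hG hg ha1 hra
    have hsn : r + gap G (a + 1) < n := by omega
    by_cases h1 : r' = n
    · rw [h1] at heq
      have e := heq r (by omega)
      rw [pos_Z, pos_P ha1] at e
      exact fin2_ne _ _ (specZ hG hg n hn (by omega)) hP2 e.symm
    · have hrn0' : r' < n := by omega
      have e1 := heq (r + gap G (a + 1)) (by omega)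
      have e2 := heq r (by omega)
      rw [pos_S hrn0', pos_P ha1] at e1 e2
      have k1 := (specS hG hg n hn hrn0' (k := r + gap G (a + 1)) (by omega)).mp
        (by rw [← e1]; exact hP4)
      have k2 := (specS hG hg n hn hrn0' (k := r) (by omega)).mp (by rw [← e2]; exact hP2)
      have := gap_succ_pos hG a
      omega
  · -- both P
    obtain ⟨hP1, hP2, hP3, hP4⟩ := specP hG hg ha1 hra
    obtain ⟨hQ1, hQ2, hQ3, hQ4⟩ := specP hG hg ha1' hra'
    have hsn : r + gap G (a + 1) < n := by omega
    have hsn' : r' + gap G (a' + 1) < n := by omega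
    have heq' : ∀ k < n, w (G a - r + k) = w (G a' - r' + k) := by
      intro k hk
      have := heq k hk
      rwa [pos_P ha1, pos_P ha1'] at this
    have hrr : r = r' := by
      rcases lt_trichotomy r r' with h | h | h
      · exact absurd (heq' r (by omega)) (fun e => fin2_ne _ _ (hQ1 r h) hP2 e.symm)
      · exact h
      · exact absurd (heq' r' (by omega)) (fun e => fin2_ne _ _ (hP1 r' h) hQ2 e)
    subst hrr
    have hgg : gap G (a + 1) = gap G (a' + 1) := by
      rcases lt_trichotomy (gap G (a + 1)) (gap G (a' + 1)) with h | h | h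
      · exact absurd (heq' (r + gap G (a + 1)) hsn)
          (fun e => fin2_ne _ _
            (hQ3 (r + gap G (a + 1)) (by have := gap_succ_pos hG a; omega) (by omega))
            hP4 e.symm)
      · exact h
      · exact absurd (heq' (r + gap G (a' + 1)) hsn')
          (fun e => fin2_ne _ _
            (hP3 (r + gap G (a' + 1)) (by have := gap_succ_pos hG a'; omega) (by omega))
            hQ4 e)
    have : a + 1 = a' + 1 := gap_inj hG hg (by omega) (by omega) hgg
    rw [show a = a' by omega]

lemma surj (hG : OneDistrib w G) (hg : GapIncreasing G) {n M : ℕ} (hn : 1 ≤ n)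
    (hM : ∀ a, 1 ≤ a → gap G (a + 1) ≤ n - 1 → a ≤ M)
    (i : ℕ) (hi : 1 ≤ i) :
    ∃ c ∈ codes G n M, wordAt w i n = wordAt w (pos G n c) n := by
  have hmono := hG.2.1
  by_cases hone : ∃ k, k < n ∧ w (i + k) = 1
  · classical
    set r := Nat.find hone with hrdef
    obtain ⟨hrn, hwr⟩ : r < n ∧ w (i + r) = 1 := Nat.find_spec hone
    have hmin : ∀ k, k < r → k < n → w (i + k) = 0 := by
      intro k hk hkn
      have := Nat.find_min hone hk
      rw [fin2_zero_iff]
      intro h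
      exact this ⟨hkn, h⟩
    obtain ⟨a, ha1, hGa⟩ := (one_iff hG (by omega : 1 ≤ i + r)).mp hwr
    by_cases htwo : ∃ k, r < k ∧ k < n ∧ w (i + k) = 1
    · obtain ⟨k', hk1, hk2, hk3⟩ := htwo
      obtain ⟨j, hj1, hGj⟩ := (one_iff hG (by omega : 1 ≤ i + k')).mp hk3
      have hja : a < j := by
        rw [← hmono.lt_iff_lt]
        omega
      have hGa1 : G (a + 1) ≤ G j := by
        rcases Nat.lt_or_ge (a + 1) j with h | h
        · exact (hmono h).le
        · have : j = a + 1 := by omega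
          subst this; rfl
      have hsucc := G_succ hG a
      have hlt : r + gap G (a + 1) < n := by omega
      have haM : a ≤ M := hM a ha1 (by omega)
      have hra : r < gap G a := by
        obtain ⟨b, rfl⟩ : ∃ b, a = b + 1 := ⟨a - 1, by omega⟩
        have hsb := G_succ hG b
        rcases Nat.eq_zero_or_pos b with hb | hb
        · subst hb
          have h0 := hG.1
          unfold gap
          simp only [Nat.add_sub_cancel]
          omega
        · by_contra hcon
          have hGb : i ≤ G b := by omega
          have hGblt : G b < G (b + 1) := hmono (lt_add_one b)
          have hw0 := hmin (G b - i) (by omega) (by omega)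
          rw [fin2_zero_iff] at hw0
          exact hw0 ((one_iff hG (by omega)).mpr ⟨b, hb, by omega⟩)
      refine ⟨(a, r), ?_, ?_⟩
      · rw [mem_codes]
        exact Or.inr ⟨ha1, haM, hra, show r < n - gap G (a + 1) by omega⟩
      · rw [pos_P ha1, show G a - r = i by omega]
    · refine ⟨(0, r), ?_, ?_⟩
      · rw [mem_codes]
        exact Or.inl ⟨rfl, show r < n + 1 by omega⟩
      · rw [pos_S hrn, wordAt_eq_iff]
        intro k hk
        by_cases hkr : k = r
        · subst hkr
          rw [hwr, (specS hG hg n hn hrn hk).mpr rfl]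
        · have hL : w (i + k) = 0 := by
            rcases Nat.lt_or_ge k r with h | h
            · exact hmin k h hk
            · rw [fin2_zero_iff]
              intro hcon
              exact htwo ⟨k, by omega, hk, hcon⟩
          have hR : w (G n - r + k) = 0 := by
            rw [fin2_zero_iff]
            intro hcon
            exact hkr ((specS hG hg n hn hrn hk).mp hcon)
          rw [hL, hR]
  · refine ⟨(0, n), ?_, ?_⟩
    · rw [mem_codes]
      exact Or.inl ⟨rfl, show n < n + 1 by omega⟩
    · rw [pos_Z, wordAt_eq_iff]
      intro k hk
      have hL : w (i + k) = 0 := by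
        rw [fin2_zero_iff]
        intro hcon
        exact hone ⟨k, hk, hcon⟩
      rw [hL, specZ hG hg n hn hk]


lemma pos_ge_one (hG : OneDistrib w G) (hg : GapIncreasing G) {n M : ℕ} (hn : 1 ≤ n)
    {c : ℕ × ℕ} (hc : c ∈ codes G n M) : 1 ≤ pos G n c := by
  rcases c with ⟨a, r⟩
  simp only [mem_codes] at hc
  rcases hc with ⟨ha0, hr⟩ | ⟨ha1, haM, hra, hrn⟩
  · subst ha0
    by_cases h : r = n
    · rw [h, pos_Z]; omega
    · rw [pos_S (by omega)]
      have h1 := gap_ge_self hG hg n hn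
      have h2 := gap_le_G hG n
      omega
  · rw [pos_P ha1]
    have hra' : r < gap G a := hra
    have h2 := gap_le_G hG a
    omega

lemma complexity_formula (hG : OneDistrib w G) (hg : GapIncreasing G) {n M : ℕ}
    (hn : 1 ≤ n) (hM : ∀ a, 1 ≤ a → gap G (a + 1) ≤ n - 1 → a ≤ M) :
    complexity w n
      = (n + 1) + ∑ a ∈ Finset.Icc 1 M, min (gap G a) (n - gap G (a + 1)) := by
  have hset : {u : List (Fin 2) | u.length = n ∧ IsFactor w u}
      = (fun c => wordAt w (pos G n c) n) '' ↑(codes G n M) := by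
    rw [factorSet_eq]
    ext u
    simp only [Set.mem_setOf_eq, Set.mem_image, Finset.mem_coe]
    constructor
    · rintro ⟨i, hi, rfl⟩
      obtain ⟨c, hc, he⟩ := surj hG hg hn hM i hi
      exact ⟨c, hc, he.symm⟩
    · rintro ⟨c, hc, rfl⟩
      exact ⟨pos G n c, pos_ge_one hG hg hn hc, rfl⟩
  rw [complexity, hset, Set.ncard_image_of_injOn (inj hG hg n M hn),
    Set.ncard_coe_finset, codes_card]

lemma sum_gap_Icc (hG : OneDistrib w G) (m : ℕ) :
    ∑ a ∈ Finset.Icc 1 m, gap G a = G m := by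
  induction m with
  | zero => simp [hG.1]
  | succ k ih =>
    rw [Finset.sum_Icc_succ_top (by omega : 1 ≤ k + 1), ih, ← G_succ hG]

lemma sum_gap_Ioc (hG : OneDistrib w G) (p q : ℕ) (hpq : p ≤ q) :
    (∑ a ∈ Finset.Ioc p q, (gap G (a + 1) : ℤ)) = (G (q + 1) : ℤ) - (G (p + 1) : ℤ) := by
  induction q, hpq using Nat.le_induction with
  | base => simp
  | succ k hk ih =>
    rw [Finset.sum_Ioc_succ_top hk (fun a => (gap G (a + 1) : ℤ)), ih]
    have h := G_succ hG (k + 1)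
    push_cast [h]
    ring

end main

end Stmt2Aux

theorem stmt2 (w : ℕ → Fin 2) (G : ℕ → ℕ) (hG : OneDistrib w G)
    (hg : GapIncreasing G) (n : ℕ) (hn : 1 ≤ n) :
    (n ≤ gap G 1 → complexity w n = n + 1) ∧
    (gap G 1 < n →
      ∀ L M : ℕ,
        (n + 1 ≤ gap G (L + 1) + gap G (L + 2) ∧
          ∀ L', n + 1 ≤ gap G (L' + 1) + gap G (L' + 2) → L ≤ L') →
        (gap G (M + 1) ≤ n - 1 ∧ ∀ M', gap G (M' + 1) ≤ n - 1 → M' ≤ M) →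
        (complexity w n : ℤ)
          = (G L : ℤ) + (G (L + 1) : ℤ) - (G (M + 1) : ℤ)
            + (n : ℤ) * ((M : ℤ) - (L : ℤ)) + (n : ℤ) + 1) := by
  constructor
  · intro hng
    have hM0 : ∀ a, 1 ≤ a → gap G (a + 1) ≤ n - 1 → a ≤ 0 := by
      intro a ha hle
      exfalso
      have h1 : gap G 2 ≤ gap G (a + 1) :=
        Stmt2Aux.gap_mono hG hg (by omega) (by omega)
      have h2 := hg 1 le_rfl
      have h3 : gap G (1 + 1) = gap G 2 := rfl
      omega
    have := Stmt2Aux.complexity_formula hG hg hn hM0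
    simpa using this
  · intro hgn L M hL hM
    have hML : ∀ a, 1 ≤ a → gap G (a + 1) ≤ n - 1 → a ≤ M := fun a _ h => hM.2 a h
    have hcf := Stmt2Aux.complexity_formula hG hg hn hML
    have hLM : L ≤ M := by
      rcases Nat.eq_zero_or_pos L with h0 | h1
      · omega
      · obtain ⟨b, rfl⟩ : ∃ b, L = b + 1 := ⟨L - 1, by omega⟩
        have hnb : ¬ (n + 1 ≤ gap G (b + 1) + gap G (b + 2)) := by
          intro hcon
          have := hL.2 b hcon
          omega
        have hp := Stmt2Aux.gap_pos hG (b + 1) (by omega)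
        exact hM.2 (b + 1) (by
          have h' : gap G (b + 1 + 1) = gap G (b + 2) := rfl
          omega)
    have hminL : ∀ a ∈ Finset.Ioc 0 L, min (gap G a) (n - gap G (a + 1)) = gap G a := by
      intro a ha
      rw [Finset.mem_Ioc] at ha
      obtain ⟨b, rfl⟩ : ∃ b, a = b + 1 := ⟨a - 1, by omega⟩
      have hnb : ¬ (n + 1 ≤ gap G (b + 1) + gap G (b + 2)) := by
        intro hcon
        have := hL.2 b hcon
        omega
      have h' : gap G (b + 1 + 1) = gap G (b + 2) := rfl
      have hp := Stmt2Aux.gap_pos hG (b + 1) (by omega)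
      have hp2 := Stmt2Aux.gap_succ_pos hG (b + 1)
      exact min_eq_left (by omega)
    have hminU : ∀ a ∈ Finset.Ioc L M, min (gap G a) (n - gap G (a + 1)) = n - gap G (a + 1) := by
      intro a ha
      rw [Finset.mem_Ioc] at ha
      have h1 : gap G (L + 1) ≤ gap G a :=
        Stmt2Aux.gap_mono hG hg (by omega) (by omega)
      have h2 : gap G (L + 2) ≤ gap G (a + 1) :=
        Stmt2Aux.gap_mono hG hg (by omega) (by omega)
      have h3 := hL.1
      exact min_eq_right (by omega)
    have hgap_le : ∀ a ∈ Finset.Ioc L M, gap G (a + 1) ≤ n := by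
      intro a ha
      rw [Finset.mem_Ioc] at ha
      have h1 : gap G (a + 1) ≤ gap G (M + 1) :=
        Stmt2Aux.gap_mono hG hg (by omega) (by omega)
      have h2 := hM.1
      omega
    have e2 : ∑ a ∈ Finset.Ioc 0 L, gap G a = G L := by
      rw [← Finset.Icc_add_one_left_eq_Ioc]
      exact Stmt2Aux.sum_gap_Icc hG L
    have e3 : ((∑ a ∈ Finset.Ioc L M, (n - gap G (a + 1)) : ℕ) : ℤ)
        = ∑ a ∈ Finset.Ioc L M, ((n : ℤ) - (gap G (a + 1) : ℤ)) := by
      rw [Nat.cast_sum]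
      exact Finset.sum_congr rfl (fun a ha => by rw [Nat.cast_sub (hgap_le a ha)])
    have e4 : ∑ a ∈ Finset.Ioc L M, ((n : ℤ) - (gap G (a + 1) : ℤ))
        = ((Finset.Ioc L M).card : ℤ) * (n : ℤ) - ((G (M + 1) : ℤ) - (G (L + 1) : ℤ)) := by
      rw [Finset.sum_sub_distrib, Finset.sum_const, Stmt2Aux.sum_gap_Ioc hG L M hLM]
      push_cast
      ring
    have e5 : ((Finset.Ioc L M).card : ℤ) = (M : ℤ) - (L : ℤ) := by
      rw [Nat.card_Ioc, Nat.cast_sub hLM]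
    have hS : ((∑ a ∈ Finset.Icc 1 M, min (gap G a) (n - gap G (a + 1)) : ℕ) : ℤ)
        = (G L : ℤ) + ((n : ℤ) * ((M : ℤ) - (L : ℤ)) - ((G (M + 1) : ℤ) - (G (L + 1) : ℤ))) := by
      rw [show Finset.Icc 1 M = Finset.Ioc 0 M from (Finset.Icc_add_one_left_eq_Ioc 0 M),
        ← Finset.sum_Ioc_consecutive _ (Nat.zero_le L) hLM,
        Finset.sum_congr rfl hminL, Finset.sum_congr rfl hminU, e2,
        Nat.cast_add, e3, e4, e5]
      ring
    rw [hcf, Nat.cast_add, hS]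
    push_cast
    ring
end

section
/- Let w be the infinite binary word with 1-distribution function G(n) = n^k for a fixed integer k > 1. Then the subword complexity of w satisfies f_w(n) = Θ(n^{k/(k-1)}), i.e., there exist positive constants c₁, c₂ (depending on k) and N such that c₁ n^{k/(k-1)} ≤ f_w(n) ≤ c₂ n^{k/(k-1)} for all n ≥ N. -/
open Finset in
lemma pow_succ_sub (k a : ℕ) (hk : 1 ≤ k) :
    (a+1)^k = a^k + ∑ i ∈ range k, (a+1)^i * a^(k-1-i) := by
  have h := Commute.geom_sum₂_mul (Commute.all ((a:ℤ)+1) (a:ℤ)) k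
  have : ((a:ℤ)+1) - a = 1 := by ring
  rw [this, mul_one] at h
  have := h
  zify
  push_cast
  linarith [h]

open Finset in
lemma gap_lb (k a : ℕ) (hk : 1 ≤ k) : a^k + (a+1)^(k-1) ≤ (a+1)^k := by
  rw [pow_succ_sub k a hk]
  have hmem : k - 1 ∈ range k := by simp; omega
  have := Finset.single_le_sum (f := fun i => (a+1)^i * a^(k-1-i))
    (fun i _ => Nat.zero_le _) hmem
  simp at this
  omega

open Finset in
lemma gap_ub (k a : ℕ) (hk : 1 ≤ k) : (a+1)^k ≤ a^k + k * (a+1)^(k-1) := by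
  rw [pow_succ_sub k a hk]
  have : ∑ i ∈ range k, (a+1)^i * a^(k-1-i) ≤ ∑ _i ∈ range k, (a+1)^(k-1) := by
    apply Finset.sum_le_sum
    intro i hi
    simp at hi
    calc (a+1)^i * a^(k-1-i) ≤ (a+1)^i * (a+1)^(k-1-i) := by
          exact Nat.mul_le_mul_left _ (Nat.pow_le_pow_left (by omega) _)
      _ = (a+1)^(i + (k-1-i)) := (pow_add _ _ _).symm
      _ ≤ (a+1)^(k-1) := Nat.pow_le_pow_right (by omega) (by omega)
  simp at this
  omega

open Finset in
lemma gap_strict (k a b : ℕ) (hk : 2 ≤ k) (hab : a < b) :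
    (a+1)^k + b^k < (b+1)^k + a^k := by
  rw [pow_succ_sub k a (by omega), pow_succ_sub k b (by omega)]
  have : ∑ i ∈ range k, (a+1)^i * a^(k-1-i) < ∑ i ∈ range k, (b+1)^i * b^(k-1-i) := by
    apply Finset.sum_lt_sum (f := fun i => (a+1)^i * a^(k-1-i))
    · intro i _
      exact Nat.mul_le_mul (Nat.pow_le_pow_left (by omega) _) (Nat.pow_le_pow_left (by omega) _)
    · refine ⟨k-1, by simp; omega, ?_⟩
      simp only [Nat.sub_self, Nat.sub_sub_self]
      have h1 : (a+1)^(k-1) < (b+1)^(k-1) := Nat.pow_lt_pow_left (show a+1<b+1 by omega) (show k-1 ≠ 0 by omega)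
      simpa using h1
  omega

def win (w : ℕ → Fin 2) (i n : ℕ) : List (Fin 2) :=
  (List.range n).map (fun t => w (i + t))

lemma win_length (w : ℕ → Fin 2) (i n : ℕ) : (win w i n).length = n := by
  simp [win]

lemma win_mem (w : ℕ → Fin 2) (i n : ℕ) (hi : 1 ≤ i) :
    win w i n ∈ {u : List (Fin 2) | u.length = n ∧ IsFactor w u} := by
  refine ⟨win_length w i n, i, hi, ?_⟩
  rw [FactorAt, win_length]
  rfl

lemma factor_eq_win (w : ℕ → Fin 2) (n : ℕ) (u : List (Fin 2))
    (hu : u ∈ {u : List (Fin 2) | u.length = n ∧ IsFactor w u}) :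
    ∃ i, 1 ≤ i ∧ u = win w i n := by
  obtain ⟨hlen, i, hi, hfa⟩ := hu
  exact ⟨i, hi, by rw [hfa, hlen]; rfl⟩

lemma win_eq_of (w : ℕ → Fin 2) (i j n : ℕ) (h : ∀ t, t < n → w (i + t) = w (j + t)) :
    win w i n = win w j n := by
  apply List.map_congr_left
  intro t ht
  exact h t (List.mem_range.mp ht)

lemma win_apply (w : ℕ → Fin 2) (i j n : ℕ) (h : win w i n = win w j n)
    (t : ℕ) (ht : t < n) : w (i + t) = w (j + t) := by
  have h1 : (win w i n)[t]'(by rw [win_length]; exact ht) =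
      (win w j n)[t]'(by rw [win_length]; exact ht) := by simp [h]
  simpa [win] using h1

section
variable {k : ℕ} {w : ℕ → Fin 2} (hG : OneDistrib w (fun n => n ^ k))

include hG

lemma w_one_s3 (m : ℕ) (hm : 1 ≤ m) : w (m ^ k) = 1 := by
  have hk1 : 1 ≤ m ^ k := Nat.one_le_pow _ _ hm
  exact (hG.2.2 _ hk1).mpr ⟨m, hm, rfl⟩

lemma w_zero_s3 (p : ℕ) (hp : 1 ≤ p) (h : ∀ m, 1 ≤ m → m ^ k ≠ p) : w p = 0 := by
  have h1 : w p ≠ 1 := by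
    intro hw
    obtain ⟨m, hm, hmp⟩ := (hG.2.2 _ hp).mp hw
    exact h m hm hmp
  omega

lemma w_between (hk : 1 ≤ k) (a p : ℕ) (h1 : a ^ k < p) (h2 : p < (a + 1) ^ k) :
    w p = 0 := by
  refine w_zero_s3 hG p (by omega) ?_
  intro m hm hmp
  rcases le_or_gt m a with h | h
  · exact absurd hmp (Nat.ne_of_lt (lt_of_le_of_lt (Nat.pow_le_pow_left h k) h1))
  · exact absurd hmp (Nat.ne_of_gt (lt_of_lt_of_le h2 (Nat.pow_le_pow_left (show a+1 ≤ m by omega) k)))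

end

/-- candidate gap indices -/

def Rset (k n : ℕ) : Finset ℕ :=
  (Finset.range (n+1)).filter (fun m => 1 ≤ m ∧ (m+1)^k ≤ m^k + n)

/-- representative starting positions -/
def Iset (k n : ℕ) : Finset ℕ :=
  insert ((n+1)^k + 1)
    (((Finset.range n).image (fun d => (n+1)^k - d)) ∪
     ((Rset k n ×ˢ Finset.range n).image (fun p => p.1^k - p.2)))

lemma Iset_card (k n : ℕ) : (Iset k n).card ≤ 1 + n + (Rset k n).card * n := by
  calc (Iset k n).card ≤ _ + 1 := Finset.card_insert_le _ _
    _ ≤ ((Finset.range n).image (fun d => (n+1)^k - d)).card +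
        ((Rset k n ×ˢ Finset.range n).image (fun p => p.1^k - p.2)).card + 1 := by
        have := Finset.card_union_le ((Finset.range n).image (fun d => (n+1)^k - d))
          ((Rset k n ×ˢ Finset.range n).image (fun p => p.1^k - p.2))
        omega
    _ ≤ n + (Rset k n).card * n + 1 := by
        have h1 := Finset.card_image_le (s := Finset.range n) (f := fun d => (n+1)^k - d)
        have h2 := Finset.card_image_le (s := Rset k n ×ˢ Finset.range n)
          (f := fun p : ℕ × ℕ => p.1^k - p.2)
        rw [Finset.card_range] at h1
        rw [Finset.card_product, Finset.card_range] at h2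
        omega
    _ = 1 + n + (Rset k n).card * n := by omega

section
variable {k : ℕ} {w : ℕ → Fin 2} (hG : OneDistrib w (fun n => n ^ k))
include hG

lemma cover (hk : 2 ≤ k) (n : ℕ) (hn : 1 ≤ n) :
    {u : List (Fin 2) | u.length = n ∧ IsFactor w u} ⊆
      (fun i => win w i n) '' ↑(Iset k n) := by
  have hk1 : 1 ≤ k := by omega
  -- useful gap facts
  have hg1 : n^k + n < (n+1)^k := by
    have := gap_lb k n hk1
    have h2 : n + 1 ≤ (n+1)^(k-1) := Nat.le_self_pow (by omega) _
    omega
  have hg2 : (n+1)^k + n < (n+2)^k := by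
    have h0 := gap_lb k (n+1) hk1
    rw [show n+1+1 = n+2 by omega] at h0
    have h2 : n + 2 ≤ (n+2)^(k-1) := Nat.le_self_pow (by omega) _
    omega
  intro u hu
  obtain ⟨i, hi, hui⟩ := factor_eq_win w n u hu
  by_cases hone : ∃ t, t < n ∧ w (i + t) = 1
  · -- there is a one in the window
    obtain ⟨t₀, ht₀, hw₀⟩ := hone
    obtain ⟨m₁, hm₁, hm₁p⟩ := (hG.2.2 (i + t₀) (by omega)).mp hw₀
    simp only at hm₁p
    have hex : ∃ m, 1 ≤ m ∧ i ≤ m ^ k := ⟨m₁, hm₁, by omega⟩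
    classical
    obtain ⟨m, ⟨hm1, hmi⟩, hmin⟩ :
        ∃ m, (1 ≤ m ∧ i ≤ m ^ k) ∧ ∀ m', m' < m → ¬(1 ≤ m' ∧ i ≤ m' ^ k) :=
      ⟨Nat.find hex, Nat.find_spec hex, fun m' hm' => Nat.find_min hex hm'⟩
    have hmle : m ≤ m₁ := by
      by_contra hc
      exact hmin m₁ (by omega) ⟨hm₁, by omega⟩
    have hmwin : m ^ k ≤ i + t₀ := le_trans (Nat.pow_le_pow_left hmle k) (le_of_eq hm₁p)
    obtain ⟨d, hd⟩ : ∃ d, d = m ^ k - i := ⟨_, rfl⟩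
    have hdn : d < n := by omega
    -- positions below m^k but ≥ i are zero
    have lowzero : ∀ p, i ≤ p → p < m ^ k → w p = 0 := by
      intro p hp1 hp2
      rcases eq_or_lt_of_le hm1 with h1 | h1
      · have hmk : m ^ k = 1 := by rw [← h1]; simp
        omega
      · have hlow : (m - 1) ^ k < i := by
          have := hmin (m - 1) (by omega)
          push_neg at this
          exact this (by omega)
        have heq : m - 1 + 1 = m := by omega
        refine w_between hG hk1 (m-1) p (by omega) (by rw [heq]; omega)
    by_cases htwo : (m + 1) ^ k < i + n
    · -- two ones: i itself is in Iset
      refine ⟨i, ?_, hui.symm⟩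
      simp only [Iset, Finset.coe_insert, Set.mem_insert_iff, Finset.coe_union,
        Set.mem_union, Finset.coe_image, Set.mem_image]
      right; right
      refine ⟨(m, d), ?_, by simp; omega⟩
      simp only [Finset.mem_coe, Finset.mem_product, Finset.mem_range]
      refine ⟨?_, hdn⟩
      simp only [Rset, Finset.mem_filter, Finset.mem_range]
      have hgap : m ^ k + (m+1)^(k-1) ≤ (m+1)^k := gap_lb k m hk1
      have hmn : m + 1 ≤ (m+1)^(k-1) := Nat.le_self_pow (by omega) _
      exact ⟨by omega, hm1, by omega⟩
    · -- at most one one: rewrite to canonical position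
      push_neg at htwo
      refine ⟨(n+1)^k - d, ?_, ?_⟩
      · simp only [Iset, Finset.coe_insert, Set.mem_insert_iff, Finset.coe_union,
          Set.mem_union, Finset.coe_image, Set.mem_image]
        right; left
        exact ⟨d, by simpa using hdn, rfl⟩
      · rw [hui]
        apply win_eq_of
        intro t ht
        have hdk : d < (n+1)^k := by omega
        rcases lt_trichotomy t d with h | h | h
        · -- both zero
          have hL : w (i + t) = 0 := lowzero (i+t) (by omega) (by omega)
          have hR : w ((n+1)^k - d + t) = 0 := by
            refine w_between hG hk1 n ((n+1)^k - d + t) (by omega) (by omega)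
          rw [hL, hR]
        · -- both one
          have hL : i + t = m ^ k := by omega
          have hR : (n+1)^k - d + t = (n+1)^k := by omega
          rw [hL, hR, w_one_s3 hG m hm1, w_one_s3 hG (n+1) (by omega)]
        · -- both zero (after the one)
          have hL : w (i + t) = 0 := by
            refine w_between hG hk1 m (i + t) (by omega) (by omega)
          have hR : w ((n+1)^k - d + t) = 0 := by
            refine w_between hG hk1 (n+1) ((n+1)^k - d + t) (by omega) ?_
            rw [show (n+1)+1 = n + 2 by omega]
            omega
          rw [hL, hR]
  · -- no ones: all-zero window
    push_neg at hone
    refine ⟨(n+1)^k + 1, ?_, ?_⟩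
    · simp [Iset]
    · rw [hui]
      apply win_eq_of
      intro t ht
      have hL : w (i + t) = 0 := by
        have := hone t ht
        omega
      have hR : w ((n+1)^k + 1 + t) = 0 := by
        refine w_between hG hk1 (n+1) ((n+1)^k + 1 + t) (by omega) ?_
        rw [show (n+1)+1 = n + 2 by omega]
        omega
      rw [hL, hR]
end

section
variable {k : ℕ} {w : ℕ → Fin 2} (hG : OneDistrib w (fun n => n ^ k))
include hG

lemma before_zero (hk : 2 ≤ k) (m d t : ℕ) (hm : 1 ≤ m) (hd : d < m^(k-1)) (ht : t < d) :
    w (m^k - d + t) = 0 := by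
  have hk1 : 1 ≤ k := by omega
  have hgap : (m-1)^k + m^(k-1) ≤ m^k := by
    have := gap_lb k (m-1) hk1
    rw [show m-1+1 = m by omega] at this
    exact this
  have hdk : d ≤ m^k := by
    have : m^(k-1) ≤ m^k := Nat.pow_le_pow_right hm (by omega)
    omega
  refine w_between hG hk1 (m-1) (m^k - d + t) (by omega) ?_
  rw [show m-1+1 = m by omega]
  omega

lemma after_zero (hk : 2 ≤ k) (m d t : ℕ) (hm : 1 ≤ m) (hd : d ≤ m^k) (ht : d < t)
    (ht2 : t + m^k < d + (m+1)^k) : w (m^k - d + t) = 0 := by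
  have hk1 : 1 ≤ k := by omega
  exact w_between hG hk1 m (m^k - d + t) (by omega) (by omega)

/-- key distinctness step -/
lemma key_step (hk : 2 ≤ k) (n L : ℕ) (hL : 1 ≤ L)
    (hc : k * 4^k * L^(k-1) ≤ n)
    (m d m' d' : ℕ) (hm : L < m) (hm2 : m ≤ 2*L) (hd : d < L^(k-1))
    (hm' : L < m') (hm2' : m' ≤ 2*L) (hd' : d' < L^(k-1))
    (heq : win w (m^k - d) n = win w (m'^k - d') n) :
    d ≤ d' → d = d' := by
  intro hdd
  have hk1 : 1 ≤ k := by omega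
  by_contra hne
  have hlt : d < d' := by omega
  have hkk : 1 ≤ k * 4^k := Nat.one_le_iff_ne_zero.mpr (by positivity)
  have hdL : L^(k-1) ≤ n := by nlinarith
  have hd'n : d' < n := by omega
  have hLm : L^(k-1) ≤ m^(k-1) := Nat.pow_le_pow_left (by omega) _
  have hLm' : L^(k-1) ≤ m'^(k-1) := Nat.pow_le_pow_left (by omega) _
  have happ := win_apply w _ _ n heq d' hd'n
  -- RHS is 1
  have hd'k : d' ≤ m'^k := by
    have : m'^(k-1) ≤ m'^k := Nat.pow_le_pow_right (by omega) (by omega)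
    omega
  have hR : w (m'^k - d' + d') = 1 := by
    rw [show m'^k - d' + d' = m'^k by omega]
    exact w_one_s3 hG m' (by omega)
  -- LHS is 0
  have hgapub : m^k + (m+1)^(k-1) ≤ (m+1)^k := gap_lb k m hk1
  have hmm1 : m^(k-1) ≤ (m+1)^(k-1) := Nat.pow_le_pow_left (by omega) _
  have hdk : d ≤ m^k := by
    have : m^(k-1) ≤ m^k := Nat.pow_le_pow_right (by omega) (by omega)
    omega
  have hL0 : w (m^k - d + d') = 0 :=
    after_zero hG hk (m := m) (d := d) (t := d') (by omega) hdk hlt (by omega)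
  rw [happ, hR] at hL0
  exact absurd hL0 (by omega)

lemma key_step2 (hk : 2 ≤ k) (n L : ℕ) (hL : 1 ≤ L)
    (hc : k * 4^k * L^(k-1) ≤ n)
    (m d m' : ℕ) (hm : L < m) (hm2 : m ≤ 2*L) (hd : d < L^(k-1))
    (hm' : L < m') (hm2' : m' ≤ 2*L)
    (heq : win w (m^k - d) n = win w (m'^k - d) n) :
    m ≤ m' → m = m' := by
  intro hmm
  have hk1 : 1 ≤ k := by omega
  by_contra hne
  have hlt : m < m' := by omega
  have hLm : L^(k-1) ≤ m^(k-1) := Nat.pow_le_pow_left (by omega) _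
  have hLm' : L^(k-1) ≤ m'^(k-1) := Nat.pow_le_pow_left (by omega) _
  have hdk : d ≤ m^k := by
    have : m^(k-1) ≤ m^k := Nat.pow_le_pow_right (by omega) (by omega)
    omega
  have hdk' : d ≤ m'^k := by
    have : m'^(k-1) ≤ m'^k := Nat.pow_le_pow_right (by omega) (by omega)
    omega
  have hmk : m^k ≤ (m+1)^k := Nat.pow_le_pow_left (by omega) _
  -- the position of the second one of the first window
  set t := d + ((m+1)^k - m^k) with htdef
  have htn : t < n := by
    have hub : (m+1)^k ≤ m^k + k * (m+1)^(k-1) := gap_ub k m hk1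
    have h3 : (m+1)^(k-1) ≤ (3*L)^(k-1) := Nat.pow_le_pow_left (by omega) _
    have h3' : (3*L)^(k-1) = 3^(k-1) * L^(k-1) := mul_pow 3 L (k-1)
    have h34 : 3^(k-1) ≤ 4^(k-1) := Nat.pow_le_pow_left (by omega) _
    have h4k : 4^k = 4 * 4^(k-1) := by
      conv_lhs => rw [show k = 1 + (k-1) by omega]
      rw [pow_add, pow_one]
    have hL1 : 1 ≤ L^(k-1) := Nat.one_le_pow _ _ (by omega)
    have hk4 : 1 + k * 3^(k-1) ≤ k * 4^k := by
      have ha : k * 3^(k-1) ≤ k * 4^(k-1) := Nat.mul_le_mul_left _ h34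
      have hb : 1 ≤ k * 4^(k-1) := Nat.one_le_iff_ne_zero.mpr (by positivity)
      have hc5 : k * 4^k = 4 * (k * 4^(k-1)) := by rw [h4k]; ring
      omega
    have : t ≤ L^(k-1) - 1 + k * (3^(k-1) * L^(k-1)) := by
      rw [htdef]
      have : (m+1)^k - m^k ≤ k * (3^(k-1) * L^(k-1)) := by
        calc (m+1)^k - m^k ≤ k * (m+1)^(k-1) := by omega
          _ ≤ k * (3^(k-1) * L^(k-1)) := by
              rw [← h3']
              exact Nat.mul_le_mul_left _ h3
      omega
    have hfin : (1 + k * 3^(k-1)) * L^(k-1) ≤ k * 4^k * L^(k-1) :=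
      Nat.mul_le_mul_right _ hk4
    have h6 : t + 1 ≤ L^(k-1) + k * (3^(k-1) * L^(k-1)) := by omega
    have hC : L^(k-1) + k * (3^(k-1) * L^(k-1)) = (1 + k * 3^(k-1)) * L^(k-1) := by ring
    omega
  have happ := win_apply w _ _ n heq t htn
  have hL1 : w (m^k - d + t) = 1 := by
    rw [show m^k - d + t = (m+1)^k by omega]
    exact w_one_s3 hG (m+1) (by omega)
  have hgs := gap_strict k m m' hk hlt
  have hgpos : m^k < (m+1)^k := Nat.pow_lt_pow_left (by omega) (by omega)
  have hR0 : w (m'^k - d + t) = 0 := by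
    apply after_zero hG hk (m := m') (d := d) (t := t) (by omega) hdk' (by omega)
    omega
  rw [happ, hR0] at hL1
  exact absurd hL1 (by omega)

end

section
variable {k : ℕ} {w : ℕ → Fin 2} (hG : OneDistrib w (fun n => n ^ k))
include hG

lemma factorSet_finite (hk : 2 ≤ k) (n : ℕ) (hn : 1 ≤ n) :
    {u : List (Fin 2) | u.length = n ∧ IsFactor w u}.Finite :=
  Set.Finite.subset (Set.Finite.image _ (Iset k n).finite_toSet) (cover hG hk n hn)

lemma complexity_le (hk : 2 ≤ k) (n : ℕ) (hn : 1 ≤ n) :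
    complexity w n ≤ (Iset k n).card := by
  rw [complexity]
  calc Set.ncard {u : List (Fin 2) | u.length = n ∧ IsFactor w u}
      ≤ Set.ncard ((fun i => win w i n) '' ↑(Iset k n)) :=
        Set.ncard_le_ncard (cover hG hk n hn) ((Iset k n).finite_toSet.image _)
    _ ≤ (Iset k n).card := by
        have h := Set.ncard_image_le (f := fun i => win w i n) (s := ↑(Iset k n))
          (Iset k n).finite_toSet
        rwa [Set.ncard_coe_finset] at h

lemma complexity_ge (hk : 2 ≤ k) (n L : ℕ) (hL : 1 ≤ L)
    (hc : k * 4^k * L^(k-1) ≤ n) (hn : 1 ≤ n) :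
    L ^ k ≤ complexity w n := by
  classical
  set D := Finset.Ioc L (2*L) ×ˢ Finset.range (L^(k-1)) with hD
  have hmemD : ∀ p : ℕ × ℕ, p ∈ D → L < p.1 ∧ p.1 ≤ 2*L ∧ p.2 < L^(k-1) := by
    intro p hp
    rw [hD, Finset.mem_product, Finset.mem_Ioc, Finset.mem_range] at hp
    exact ⟨hp.1.1, hp.1.2, hp.2⟩
  have hpos : ∀ p : ℕ × ℕ, p ∈ D → 1 ≤ p.1^k - p.2 := by
    intro p hp
    obtain ⟨h1, h2, h3⟩ := hmemD p hp
    have hL1 : L^(k-1) ≤ p.1^(k-1) := Nat.pow_le_pow_left (by omega) _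
    have hp1 : p.1^(k-1) ≤ p.1^k := Nat.pow_le_pow_right (by omega) (by omega)
    have : 1 ≤ p.1 ^ k := Nat.one_le_pow _ _ (by omega)
    omega
  have hinj : Set.InjOn (fun p : ℕ × ℕ => win w (p.1^k - p.2) n) ↑D := by
    rintro ⟨m, d⟩ hmd ⟨m', d'⟩ hmd' heq
    obtain ⟨h1, h2, h3⟩ := hmemD _ (Finset.mem_coe.mp hmd)
    obtain ⟨h1', h2', h3'⟩ := hmemD _ (Finset.mem_coe.mp hmd')
    simp only at heq
    have hdd : d = d' := by
      rcases le_total d d' with h | h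
      · exact key_step hG hk n L hL hc m d m' d' h1 h2 h3 h1' h2' h3' heq h
      · exact (key_step hG hk n L hL hc m' d' m d h1' h2' h3' h1 h2 h3 heq.symm h).symm
    subst hdd
    have hmm : m = m' := by
      rcases le_total m m' with h | h
      · exact key_step2 hG hk n L hL hc m d m' h1 h2 h3 h1' h2' heq h
      · exact (key_step2 hG hk n L hL hc m' d m h1' h2' h3 h1 h2 heq.symm h).symm
    rw [hmm]
  have hcard : D.card = L ^ k := by
    rw [hD, Finset.card_product, Nat.card_Ioc, Finset.card_range,
      show 2*L - L = L by omega]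
    conv_rhs => rw [show k = 1 + (k-1) by omega]
    rw [pow_add, pow_one]
  have hfin := factorSet_finite hG hk n hn
  calc L ^ k = D.card := hcard.symm
    _ = Set.ncard ((fun p : ℕ × ℕ => win w (p.1^k - p.2) n) '' ↑D) := by
        rw [Set.ncard_image_of_injOn hinj, Set.ncard_coe_finset]
    _ ≤ Set.ncard {u : List (Fin 2) | u.length = n ∧ IsFactor w u} := by
        refine Set.ncard_le_ncard ?_ hfin
        rintro u ⟨p, hp, rfl⟩
        exact win_mem w _ n (hpos p (Finset.mem_coe.mp hp))
    _ = complexity w n := rfl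

end

lemma Rset_pow_le (k n : ℕ) (hk : 2 ≤ k) :
    ∀ m ∈ Rset k n, m ^ (k-1) ≤ n := by
  intro m hm
  rw [Rset, Finset.mem_filter] at hm
  obtain ⟨_, hm1, hm2⟩ := hm
  have hgap : m^k + (m+1)^(k-1) ≤ (m+1)^k := gap_lb k m (by omega)
  have : m^(k-1) ≤ (m+1)^(k-1) := Nat.pow_le_pow_left (by omega) _
  omega


theorem stmt3 (k : ℕ) (hk : 1 < k) (w : ℕ → Fin 2)
    (hG : OneDistrib w (fun n => n ^ k)) :
    ∃ c₁ c₂ : ℝ, 0 < c₁ ∧ 0 < c₂ ∧ ∃ N : ℕ, ∀ n, N ≤ n →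
      c₁ * (n : ℝ) ^ ((k : ℝ) / ((k : ℝ) - 1)) ≤ (complexity w n : ℝ) ∧
      (complexity w n : ℝ) ≤ c₂ * (n : ℝ) ^ ((k : ℝ) / ((k : ℝ) - 1)) := by
  have hk2 : 2 ≤ k := hk
  set K := k - 1 with hKdef
  have hK1 : 1 ≤ K := by omega
  have hKcast : ((K : ℕ) : ℝ) = (k : ℝ) - 1 := by
    rw [hKdef]
    push_cast [Nat.cast_sub (show 1 ≤ k by omega)]
    ring
  have hKne : ((K : ℕ) : ℝ) ≠ 0 := by
    rw [hKcast]
    have : (2:ℝ) ≤ (k:ℝ) := by exact_mod_cast hk2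
    linarith
  set e := (k : ℝ) / ((k : ℝ) - 1) with hedef
  have hkR : (2:ℝ) ≤ (k:ℝ) := by exact_mod_cast hk2
  have he1 : 1 ≤ e := by
    rw [hedef, le_div_iff₀ (by linarith)]
    linarith
  have he0 : 0 ≤ e := by linarith
  -- the root-of-power identity
  have hroot : ∀ y : ℝ, 0 ≤ y → (y ^ ((1:ℝ)/K)) ^ (K : ℕ) = y := by
    intro y hy
    rw [← Real.rpow_natCast (y ^ ((1:ℝ)/K)) K, ← Real.rpow_mul hy]
    rw [one_div, inv_mul_cancel₀ hKne, Real.rpow_one]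
  have hrootle : ∀ (m : ℕ) (y : ℝ), 0 ≤ y → ((m:ℝ)) ^ (K:ℕ) ≤ y → (m:ℝ) ≤ y ^ ((1:ℝ)/K) := by
    intro m y hy hle
    have h1 : (((m:ℝ) ^ (K:ℕ))) ^ ((1:ℝ)/K) ≤ y ^ ((1:ℝ)/K) :=
      Real.rpow_le_rpow (by positivity) hle (by positivity)
    calc (m:ℝ) = (((m:ℝ) ^ (K:ℕ))) ^ ((1:ℝ)/K) := by
          rw [← Real.rpow_natCast (m:ℝ) K, ← Real.rpow_mul (Nat.cast_nonneg m),
            mul_one_div, div_self hKne, Real.rpow_one]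
      _ ≤ y ^ ((1:ℝ)/K) := h1
  set c := k * 4 ^ k with hcdef
  have hc1 : 1 ≤ c := by
    have : 1 ≤ 4 ^ k := Nat.one_le_pow _ _ (by omega)
    have : k * 1 ≤ k * 4 ^ k := Nat.mul_le_mul_left _ this
    omega
  have hcR : (0:ℝ) < (c:ℝ) := by exact_mod_cast hc1
  refine ⟨((2:ℝ)^k * (c:ℝ) ^ e)⁻¹, 4, ?_, by norm_num, c * 2 ^ K + 1, ?_⟩
  · have := Real.rpow_pos_of_pos hcR e
    positivity
  intro n hn
  have hn1 : 1 ≤ n := by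
    have : 1 ≤ c * 2 ^ K := Nat.one_le_iff_ne_zero.mpr (by positivity)
    omega
  have hnR : (1:ℝ) ≤ (n:ℝ) := by exact_mod_cast hn1
  have hnpos : (0:ℝ) < (n:ℝ) := by linarith
  have hne : (n:ℝ) ^ ((1:ℝ)/K) * (n:ℝ) = (n:ℝ) ^ e := by
    nth_rw 2 [← Real.rpow_one (n:ℝ)]
    rw [← Real.rpow_add hnpos]
    congr 1
    rw [hedef, ← hKcast]
    field_simp
    rw [hKcast]
    ring
  have honeLe : (1:ℝ) ≤ (n:ℝ) ^ e := by
    calc (1:ℝ) = (1:ℝ) ^ e := (Real.one_rpow e).symm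
      _ ≤ (n:ℝ) ^ e := Real.rpow_le_rpow (by norm_num) hnR he0
  have hnLe : (n:ℝ) ≤ (n:ℝ) ^ e := by
    nth_rw 1 [← Real.rpow_one (n:ℝ)]
    exact Real.rpow_le_rpow_of_exponent_le hnR he1
  constructor
  · -- LOWER BOUND
    set y := ((n:ℝ)/c) ^ ((1:ℝ)/K) with hydef
    have hnc0 : 0 ≤ (n:ℝ)/c := by positivity
    have hy0 : 0 ≤ y := by positivity
    have hy2 : (2:ℝ) ≤ y := by
      have h2K : ((2:ℕ):ℝ) ^ (K:ℕ) ≤ (n:ℝ)/c := by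
        rw [le_div_iff₀ hcR]
        have h' : ((c * 2 ^ K : ℕ) : ℝ) ≤ (n:ℝ) := by
          exact_mod_cast (show c * 2 ^ K ≤ n by omega)
        push_cast at h'
        push_cast
        linarith
      have h := hrootle 2 ((n:ℝ)/c) hnc0 h2K
      rw [hydef]
      exact_mod_cast h
    set L := ⌊y⌋₊ with hLdef
    have hLy : (L:ℝ) ≤ y := Nat.floor_le hy0
    have hyL : y < (L:ℝ) + 1 := Nat.lt_floor_add_one y
    have hL1 : 1 ≤ L := by
      have : (1:ℕ) ≤ y := by exact_mod_cast le_trans (by norm_num) hy2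
      exact Nat.le_floor (by exact_mod_cast this)
    have hyK : y ^ (K:ℕ) = (n:ℝ)/c := hroot _ hnc0
    have hcond : c * L ^ K ≤ n := by
      have h1 : (L:ℝ) ^ (K:ℕ) ≤ (n:ℝ)/c := by
        rw [← hyK]
        exact pow_le_pow_left₀ (Nat.cast_nonneg L) hLy K
      rw [le_div_iff₀ hcR] at h1
      have : ((c * L ^ K : ℕ) : ℝ) ≤ (n:ℝ) := by push_cast; linarith
      exact_mod_cast this
    have hge := complexity_ge hG hk2 n L hL1 (by rw [← hKdef, ← hcdef]; exact hcond) hn1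
    have hgeR : ((L:ℝ)) ^ (k:ℕ) ≤ (complexity w n : ℝ) := by
      have := (Nat.cast_le (α := ℝ)).mpr hge
      push_cast at this
      linarith
    have hhalf : y/2 ≤ (L:ℝ) := by linarith
    have hLk : (y/2) ^ (k:ℕ) ≤ ((L:ℝ)) ^ (k:ℕ) := pow_le_pow_left₀ (by linarith) hhalf k
    have hyk : y ^ (k:ℕ) = ((n:ℝ)/c) ^ e := by
      rw [hydef, ← Real.rpow_natCast (((n:ℝ)/c) ^ ((1:ℝ)/K)) k, ← Real.rpow_mul hnc0]
      congr 1
      rw [hedef, ← hKcast]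
      field_simp
    have hdiv : ((n:ℝ)/c) ^ e = (n:ℝ) ^ e / (c:ℝ) ^ e :=
      Real.div_rpow (Nat.cast_nonneg n) (le_of_lt hcR) e
    have hexp : (y/2) ^ (k:ℕ) = y ^ (k:ℕ) / (2:ℝ)^k := div_pow y 2 k
    have hcpos : (0:ℝ) < (c:ℝ) ^ e := Real.rpow_pos_of_pos hcR e
    calc ((2:ℝ)^k * (c:ℝ) ^ e)⁻¹ * (n:ℝ) ^ e
        = (n:ℝ) ^ e / (c:ℝ) ^ e / (2:ℝ)^k := by
          rw [mul_inv, div_div]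
          ring
      _ = (y ^ (k:ℕ)) / (2:ℝ)^k := by rw [hyk, hdiv]
      _ = (y/2) ^ (k:ℕ) := hexp.symm
      _ ≤ ((L:ℝ)) ^ (k:ℕ) := hLk
      _ ≤ (complexity w n : ℝ) := hgeR
  · -- UPPER BOUND
    have h1 := complexity_le hG hk2 n hn1
    have h2 := Iset_card k n
    have h3 : Rset k n ⊆ Finset.range (⌊(n:ℝ) ^ ((1:ℝ)/K)⌋₊ + 1) := by
      intro m hm
      rw [Finset.mem_range]
      have hmk := Rset_pow_le k n hk2 m hm
      have hcast : ((m:ℝ)) ^ (K:ℕ) ≤ (n:ℝ) := by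
        have : ((m ^ K : ℕ) : ℝ) ≤ (n:ℝ) := by exact_mod_cast hmk
        push_cast at this
        linarith
      have hle := hrootle m (n:ℝ) (by positivity) hcast
      have := Nat.le_floor hle
      omega
    have h4 : (Rset k n).card ≤ ⌊(n:ℝ) ^ ((1:ℝ)/K)⌋₊ + 1 := by
      have := Finset.card_le_card h3
      simpa using this
    have hfl : (⌊(n:ℝ) ^ ((1:ℝ)/K)⌋₊ : ℝ) ≤ (n:ℝ) ^ ((1:ℝ)/K) := Nat.floor_le (by positivity)
    have hnat : complexity w n ≤ 1 + n + (⌊(n:ℝ) ^ ((1:ℝ)/K)⌋₊ + 1) * n := by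
      calc complexity w n ≤ (Iset k n).card := h1
        _ ≤ 1 + n + (Rset k n).card * n := h2
        _ ≤ 1 + n + (⌊(n:ℝ) ^ ((1:ℝ)/K)⌋₊ + 1) * n := by
            have := Nat.mul_le_mul_right n h4
            omega
    have hR : (complexity w n : ℝ) ≤ 1 + (n:ℝ) + ((n:ℝ) ^ ((1:ℝ)/K) + 1) * n := by
      have hc2 := (Nat.cast_le (α := ℝ)).mpr hnat
      push_cast at hc2
      have : ((⌊(n:ℝ) ^ ((1:ℝ)/K)⌋₊ : ℝ) + 1) * (n:ℝ) ≤ ((n:ℝ) ^ ((1:ℝ)/K) + 1) * n := by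
        apply mul_le_mul_of_nonneg_right _ (by positivity)
        linarith
      linarith
    calc (complexity w n : ℝ) ≤ 1 + (n:ℝ) + ((n:ℝ) ^ ((1:ℝ)/K) + 1) * n := hR
      _ = 1 + (n:ℝ) + (n:ℝ) ^ ((1:ℝ)/K) * n + n := by ring
      _ = 1 + (n:ℝ) + (n:ℝ) ^ e + n := by rw [hne]
      _ ≤ (n:ℝ)^e + (n:ℝ)^e + (n:ℝ)^e + (n:ℝ)^e := by linarith
      _ = 4 * (n:ℝ) ^ e := by ring
end

section
/- Let w be an infinite binary word whose gap function g is injective. Then the number of right special factors of w of length n equals 1 plus the number of integers l ≥ 1 satisfying both g(l) ≤ n and g(l-1) + g(l) ≥ n+1, with the convention g(0) = 0. -/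
/- ## Auxiliary lemmas -/

lemma factorAt_iff {w : ℕ → Fin 2} {i : ℕ} {u : List (Fin 2)} :
    FactorAt w i u ↔ ∀ k (h : k < u.length), u[k] = w (i + k) := by
  constructor
  · intro h k hk
    rw [List.getElem_of_eq h]
    simp
  · intro h
    unfold FactorAt
    apply List.ext_getElem (by simp)
    intro k h1 h2
    simpa using h k h1

lemma factorAt_append {w : ℕ → Fin 2} {i : ℕ} {x y : List (Fin 2)} :
    FactorAt w i (x ++ y) ↔ FactorAt w i x ∧ FactorAt w (i + x.length) y := by
  simp only [factorAt_iff, List.length_append]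
  constructor
  · intro h
    refine ⟨fun k hk => ?_, fun k hk => ?_⟩
    · have := h k (by omega)
      rwa [List.getElem_append_left hk] at this
    · have := h (x.length + k) (by omega)
      rw [List.getElem_append_right (by omega)] at this
      simpa [Nat.add_assoc] using this
  · intro ⟨h1, h2⟩ k hk
    by_cases hc : k < x.length
    · rw [List.getElem_append_left hc]; exact h1 k hc
    · rw [List.getElem_append_right (by omega)]
      have := h2 (k - x.length) (by omega)
      rw [this]; congr 1; omega

lemma factorAt_singleton {w : ℕ → Fin 2} {i : ℕ} {a : Fin 2} :
    FactorAt w i [a] ↔ a = w i := by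
  rw [factorAt_iff]; constructor
  · intro h; simpa using h 0 (by simp)
  · intro h k hk
    simp only [List.length_singleton] at hk
    interval_cases k
    simpa

lemma factorAt_cons {w : ℕ → Fin 2} {i : ℕ} {a : Fin 2} {y : List (Fin 2)} :
    FactorAt w i (a :: y) ↔ a = w i ∧ FactorAt w (i + 1) y := by
  have : a :: y = [a] ++ y := rfl
  rw [this, factorAt_append, factorAt_singleton]; simp

lemma factorAt_replicate {w : ℕ → Fin 2} {i k : ℕ} :
    FactorAt w i (List.replicate k (0 : Fin 2)) ↔ ∀ j < k, w (i + j) = 0 := by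
  simp only [factorAt_iff, List.length_replicate, List.getElem_replicate]
  constructor
  · intro h j hj; exact (h j hj).symm
  · intro h j hj; exact (h j hj).symm

lemma fin2 (x : Fin 2) : x = 0 ∨ x = 1 := by revert x; decide

lemma split_first (u : List (Fin 2)) :
    u = List.replicate u.length 0 ∨
      ∃ s v, u = List.replicate s (0 : Fin 2) ++ 1 :: v := by
  induction u with
  | nil => left; rfl
  | cons a u ih =>
    rcases fin2 a with rfl | rfl
    · rcases ih with h | ⟨s, v, h⟩
      · left; rw [List.length_cons, List.replicate_succ]; rw [← h]
      · right; exact ⟨s + 1, v, by simp [h, List.replicate_succ]⟩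
    · right; exact ⟨0, u, rfl⟩

lemma repl_one_inj : ∀ (a b : ℕ) (x y : List (Fin 2)),
    List.replicate a (0 : Fin 2) ++ 1 :: x = List.replicate b (0 : Fin 2) ++ 1 :: y →
    a = b ∧ x = y := by
  intro a
  induction a with
  | zero =>
    intro b x y h
    cases b with
    | zero => simpa using h
    | succ b => rw [List.replicate_succ] at h; simp at h
  | succ a ih =>
    intro b x y h
    cases b with
    | zero => rw [List.replicate_succ] at h; simp at h
    | succ b =>
      rw [List.replicate_succ, List.replicate_succ] at h
      simp only [List.cons_append, List.cons.injEq, true_and] at h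
      obtain ⟨h1, h2⟩ := ih b x y h
      exact ⟨by omega, h2⟩

section
variable {w : ℕ → Fin 2} {G : ℕ → ℕ}

lemma G_one' (hG : OneDistrib w G) (m : ℕ) (hm : 1 ≤ m) : w (G m) = 1 := by
  obtain ⟨h0, hmono, hiff⟩ := hG
  have h1 : 1 ≤ G m := by
    have : G 0 < G m := hmono (by omega)
    omega
  exact (hiff (G m) h1).2 ⟨m, hm, rfl⟩

lemma G_zero_between' (hG : OneDistrib w G) (m p : ℕ) (h1 : G m < p) (h2 : p < G (m + 1)) :
    w p = 0 := by
  obtain ⟨h0, hmono, hiff⟩ := hG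
  have hp : 1 ≤ p := by have := Nat.zero_le (G m); omega
  rcases fin2 (w p) with h | h
  · exact h
  · obtain ⟨j, hj, hje⟩ := (hiff p hp).1 h
    have : m < j := hmono.lt_iff_lt.1 (by omega)
    have : j < m + 1 := hmono.lt_iff_lt.1 (by omega)
    omega

lemma G_add_gap' (hG : OneDistrib w G) (m : ℕ) : G (m + 1) = G m + gap G (m + 1) := by
  obtain ⟨h0, hmono, hiff⟩ := hG
  have : G m < G (m + 1) := hmono (by omega)
  simp only [gap, Nat.add_sub_cancel]
  omega

lemma gap_pos' (hG : OneDistrib w G) (m : ℕ) (hm : 1 ≤ m) : 1 ≤ gap G m := by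
  obtain ⟨h0, hmono, hiff⟩ := hG
  have : G (m - 1) < G m := hmono (by omega)
  simp only [gap]; omega

lemma G_sub_gap' (hG : OneDistrib w G) (m : ℕ) (hm : 1 ≤ m) : G m = G (m - 1) + gap G m := by
  obtain ⟨h0, hmono, hiff⟩ := hG
  have : G (m - 1) < G m := hmono (by omega)
  simp only [gap]; omega

/-- a `1` in the half-open window `(G m, G (m+1)]` must be at `G (m+1)`. -/
lemma one_in_window' (hG : OneDistrib w G) (m q : ℕ) (h1 : G m < q) (h2 : q ≤ G (m + 1))
    (hw : w q = 1) : q = G (m + 1) := by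
  rcases Nat.lt_or_ge q (G (m + 1)) with h | h
  · have := G_zero_between' hG m q h1 h
    rw [hw] at this; exact absurd this (by decide)
  · omega

lemma gap_unbounded' (hG : OneDistrib w G)
    (hinj : ∀ i j, 1 ≤ i → 1 ≤ j → gap G i = gap G j → i = j)
    (N : ℕ) : ∃ M, 1 ≤ M ∧ ∀ m, M ≤ m → N < gap G m := by
  classical
  set S : Set ℕ := {m | 1 ≤ m ∧ gap G m ≤ N} with hS
  have hfin : S.Finite := by
    apply Set.Finite.of_finite_image (f := gap G)
    · apply Set.Finite.subset (Set.finite_Icc 1 N)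
      rintro x ⟨m, ⟨hm1, hm2⟩, rfl⟩
      exact ⟨gap_pos' hG m hm1, hm2⟩
    · intro a ha b hb hab
      exact hinj a b ha.1 hb.1 hab
  obtain ⟨M, hM⟩ := hfin.bddAbove
  refine ⟨M + 1, by omega, fun m hm => ?_⟩
  by_contra hc
  have : m ∈ S := ⟨by omega, by omega⟩
  have := hM this
  omega

lemma zeros_run (hG : OneDistrib w G) (m i k : ℕ) (h1 : G m < i) (h2 : i + k ≤ G (m + 1)) :
    FactorAt w i (List.replicate k (0 : Fin 2)) := by
  rw [factorAt_replicate]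
  intro j hj
  exact G_zero_between' hG m (i + j) (by omega) (by omega)

lemma key_occ (hG : OneDistrib w G) (m s t : ℕ) (hm : 1 ≤ m) (hs : s + 1 ≤ gap G m)
    (ht : t + 1 ≤ gap G (m + 1)) :
    1 ≤ G m - s ∧
      FactorAt w (G m - s) (List.replicate s (0 : Fin 2) ++ 1 :: List.replicate t 0) := by
  have hsub : G m = G (m - 1) + gap G m := G_sub_gap' hG m hm
  have hi : G (m - 1) < G m - s := by omega
  have h1 : 1 ≤ G m - s := by omega
  refine ⟨h1, ?_⟩
  rw [factorAt_append]
  constructor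
  · have := zeros_run hG (m - 1) (G m - s) s hi (by rw [Nat.sub_add_cancel hm]; omega)
    exact this
  · rw [List.length_replicate, factorAt_cons]
    have he : G m - s + s = G m := by omega
    rw [he]
    refine ⟨(G_one' hG m hm).symm, ?_⟩
    have hadd := G_add_gap' hG m
    exact zeros_run hG m (G m + 1) t (by omega) (by omega)

lemma occ_Z1Z1 (hG : OneDistrib w G) (m s : ℕ) (hm : 1 ≤ m) (hs : s + 1 ≤ gap G m) :
    IsFactor w (List.replicate s (0 : Fin 2) ++
      1 :: (List.replicate (gap G (m + 1) - 1) (0 : Fin 2) ++ [1])) := by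
  have hgp : 1 ≤ gap G (m + 1) := gap_pos' hG (m + 1) (by omega)
  have hadd := G_add_gap' hG m
  obtain ⟨h1, h2⟩ := key_occ hG m s (gap G (m + 1) - 1) hm hs (by omega)
  refine ⟨G m - s, h1, ?_⟩
  have heq : List.replicate s (0 : Fin 2) ++
      1 :: (List.replicate (gap G (m + 1) - 1) (0 : Fin 2) ++ [1])
      = (List.replicate s (0 : Fin 2) ++ 1 :: List.replicate (gap G (m + 1) - 1) 0) ++ [1] := by
    simp
  rw [heq, factorAt_append]
  refine ⟨h2, ?_⟩
  rw [factorAt_singleton]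
  have hlen : (List.replicate s (0 : Fin 2) ++ 1 :: List.replicate (gap G (m + 1) - 1) 0).length
      = s + gap G (m + 1) := by simp; omega
  rw [hlen]
  have hsub : G m = G (m - 1) + gap G m := G_sub_gap' hG m hm
  have : G m - s + (s + gap G (m + 1)) = G (m + 1) := by omega
  rw [this]
  exact (G_one' hG (m + 1) (by omega)).symm

lemma read_Z1Z (hG : OneDistrib w G) (i s t : ℕ) (hi : 1 ≤ i)
    (h : FactorAt w i (List.replicate s (0 : Fin 2) ++ 1 :: List.replicate t 0)) :
    ∃ m, 1 ≤ m ∧ G m = i + s ∧ s + 1 ≤ gap G m ∧ t + 1 ≤ gap G (m + 1) := by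
  rw [factorAt_append, List.length_replicate, factorAt_cons, factorAt_replicate,
    factorAt_replicate] at h
  obtain ⟨hz1, hone, hz2⟩ := h
  obtain ⟨h0, hmono, hiff⟩ := id hG
  obtain ⟨m, hm1, hm2⟩ := (hiff (i + s) (by omega)).1 hone.symm
  have hsub : G m = G (m - 1) + gap G m := G_sub_gap' hG m hm1
  have hadd : G (m + 1) = G m + gap G (m + 1) := G_add_gap' hG m
  have hgp1 : 1 ≤ gap G m := gap_pos' hG m hm1
  have hlow : G (m - 1) < i := by
    rcases Nat.lt_or_ge (m - 1) 1 with hc | hc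
    · have : m - 1 = 0 := by omega
      rw [this, h0]; omega
    · by_contra hcon
      have hj : G (m - 1) - i < s := by omega
      have := hz1 (G (m - 1) - i) hj
      have he : i + (G (m - 1) - i) = G (m - 1) := by omega
      rw [he] at this
      rw [G_one' hG (m - 1) hc] at this
      exact absurd this (by decide)
  have hgap2 : t + 1 ≤ gap G (m + 1) := by
    by_contra hcon
    have hgp : 1 ≤ gap G (m + 1) := gap_pos' hG (m + 1) (by omega)
    have hj : gap G (m + 1) - 1 < t := by omega
    have := hz2 (gap G (m + 1) - 1) hj
    have he : i + s + 1 + (gap G (m + 1) - 1) = G (m + 1) := by omega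
    rw [he] at this
    rw [G_one' hG (m + 1) (by omega)] at this
    exact absurd this (by decide)
  exact ⟨m, hm1, hm2, by omega, hgap2⟩

end

theorem stmt5 (w : ℕ → Fin 2) (G : ℕ → ℕ) (hG : OneDistrib w G)
    (hinj : ∀ i j, 1 ≤ i → 1 ≤ j → gap G i = gap G j → i = j)
    (n : ℕ) (hn : 1 ≤ n) :
    Set.ncard {u : List (Fin 2) | u.length = n ∧ RightSpecial w u}
      = 1 + Set.ncard {l : ℕ | 1 ≤ l ∧ gap G l ≤ n ∧ n + 1 ≤ gap G (l - 1) + gap G l} := by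
  classical
  set T : Set ℕ := {l : ℕ | 1 ≤ l ∧ gap G l ≤ n ∧ n + 1 ≤ gap G (l - 1) + gap G l} with hT
  set f : ℕ → List (Fin 2) :=
    fun l => List.replicate (n - gap G l) (0 : Fin 2) ++ 1 :: List.replicate (gap G l - 1) 0
    with hf
  have hgap0 : gap G 0 = 0 := by simp [gap]
  have hTtwo : ∀ l ∈ T, 2 ≤ l := by
    intro l hl
    obtain ⟨hl1, hl2, hl3⟩ := hl
    by_contra hc
    have : l = 1 := by omega
    subst this
    simp only [Nat.sub_self, hgap0] at hl3
    omega
  -- the key set equality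
  have hSeq : {u : List (Fin 2) | u.length = n ∧ RightSpecial w u}
      = insert (List.replicate n (0 : Fin 2)) (f '' T) := by
    ext u
    simp only [Set.mem_setOf_eq, Set.mem_insert_iff, Set.mem_image]
    constructor
    · rintro ⟨hlen, hrs0, hrs1⟩
      rcases split_first u with hz | ⟨s, v, rfl⟩
      · left; rw [hz, hlen]
      · right
        have hlen' : s + 1 + v.length = n := by
          have := hlen; simp at this; omega
        -- auxiliary: reading an occurrence of `R s ++ 1 :: R t ++ 1 :: rest`
        have aux : ∀ (t : ℕ) (rest : List (Fin 2)) (i : ℕ), 1 ≤ i →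
            FactorAt w i (List.replicate s (0 : Fin 2) ++
              1 :: (List.replicate t (0 : Fin 2) ++ 1 :: rest)) →
            ∃ m, 1 ≤ m ∧ G m = i + s ∧ s + 1 ≤ gap G m ∧ gap G (m + 1) = t + 1 := by
          intro t rest i hi hocc
          have hsplit : List.replicate s (0 : Fin 2) ++
              1 :: (List.replicate t (0 : Fin 2) ++ 1 :: rest)
              = (List.replicate s (0 : Fin 2) ++ 1 :: List.replicate t 0) ++ (1 :: rest) := by
            simp
          rw [hsplit, factorAt_append] at hocc
          obtain ⟨hocc1, hocc2⟩ := hocc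
          obtain ⟨m, hm1, hm2, hm3, hm4⟩ := read_Z1Z hG i s t hi hocc1
          rw [factorAt_cons] at hocc2
          have hone : w (i + (List.replicate s (0 : Fin 2) ++
              1 :: List.replicate t 0).length) = 1 := hocc2.1.symm
          have hlen2 : (List.replicate s (0 : Fin 2) ++ 1 :: List.replicate t 0).length
              = s + 1 + t := by simp; omega
          rw [hlen2] at hone
          have hadd : G (m + 1) = G m + gap G (m + 1) := G_add_gap' hG m
          have hwin := one_in_window' hG m (i + (s + 1 + t)) (by omega) (by omega) hone
          exact ⟨m, hm1, hm2, hm3, by omega⟩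
        rcases split_first v with hvz | ⟨t, v', rfl⟩
        · -- exactly one `1`: this is `f l` for `l` in `T`
          obtain ⟨i, hi, hocc⟩ := hrs1
          rw [hvz] at hocc ⊢
          have hocc' : FactorAt w i (List.replicate s (0 : Fin 2) ++
              1 :: (List.replicate v.length (0 : Fin 2) ++ 1 :: ([] : List (Fin 2)))) := by
            have he : (List.replicate s (0 : Fin 2) ++ 1 :: List.replicate v.length 0) ++ [1]
                = List.replicate s (0 : Fin 2) ++
                  1 :: (List.replicate v.length (0 : Fin 2) ++ 1 :: ([] : List (Fin 2))) := by
              simp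
            rw [← he]
            simpa using hocc
          obtain ⟨m, hm1, hm2, hm3, hm4⟩ := aux v.length [] i hi hocc'
          refine ⟨m + 1, ⟨by omega, by omega, ?_⟩, ?_⟩
          · simp only [Nat.add_sub_cancel]
            omega
          · simp only [hf]
            have e1 : n - gap G (m + 1) = s := by omega
            have e2 : gap G (m + 1) - 1 = v.length := by omega
            rw [e1, e2]
        · -- at least two `1`s: not right special, contradiction
          exfalso
          obtain ⟨i, hi, hocc0⟩ := hrs0
          obtain ⟨j, hj, hocc1⟩ := hrs1
          have hlast0 : (0 : Fin 2) = w (i + n) := by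
            have h' := (factorAt_append.1 hocc0).2
            rw [factorAt_singleton] at h'
            rwa [hlen] at h'
          have hlast1 : (1 : Fin 2) = w (j + n) := by
            have h' := (factorAt_append.1 hocc1).2
            rw [factorAt_singleton] at h'
            rwa [hlen] at h'
          have hre : ∀ c : Fin 2, (List.replicate s (0 : Fin 2) ++
                1 :: (List.replicate t (0 : Fin 2) ++ 1 :: v')) ++ [c]
              = List.replicate s (0 : Fin 2) ++
                1 :: (List.replicate t (0 : Fin 2) ++ 1 :: (v' ++ [c])) := by
            intro c; simp
          rw [hre 0] at hocc0
          rw [hre 1] at hocc1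
          obtain ⟨m0, hm01, hm02, hm03, hm04⟩ := aux t (v' ++ [0]) i hi hocc0
          obtain ⟨m1, hm11, hm12, hm13, hm14⟩ := aux t (v' ++ [1]) j hj hocc1
          have hmm : m0 + 1 = m1 + 1 := hinj (m0 + 1) (m1 + 1) (by omega) (by omega) (by omega)
          have hm01' : m0 = m1 := by omega
          subst hm01'
          have hij : i = j := by omega
          subst hij
          exact absurd (hlast0.trans hlast1.symm) (by decide)
    · rintro (rfl | ⟨l, hl, rfl⟩)
      · refine ⟨by simp, ?_, ?_⟩
        · -- `0^n ++ [0] = 0^(n+1)` is a factor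
          obtain ⟨M, hM1, hM2⟩ := gap_unbounded' hG hinj (n + 1)
          have hg : n + 2 ≤ gap G M := by have := hM2 M le_rfl; omega
          have hsub : G M = G (M - 1) + gap G M := G_sub_gap' hG M hM1
          refine ⟨G (M - 1) + 1, by omega, ?_⟩
          have : List.replicate n (0 : Fin 2) ++ [0] = List.replicate (n + 1) (0 : Fin 2) := by
            rw [List.replicate_succ']
          rw [this]
          have hMe : G (M - 1) + 1 = G (M - 1) + 1 := rfl
          have := zeros_run hG (M - 1) (G (M - 1) + 1) (n + 1) (by omega)
            (by rw [Nat.sub_add_cancel hM1]; omega)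
          exact this
        · -- `0^n ++ [1]` is a factor
          obtain ⟨M, hM1, hM2⟩ := gap_unbounded' hG hinj (n + 1)
          have hg : n + 2 ≤ gap G M := by have := hM2 M le_rfl; omega
          have hgp : 1 ≤ gap G (M + 1) := gap_pos' hG (M + 1) (by omega)
          obtain ⟨h1, h2⟩ := key_occ hG M n 0 hM1 (by omega) (by omega)
          refine ⟨G M - n, h1, ?_⟩
          have : List.replicate n (0 : Fin 2) ++ [1]
              = List.replicate n (0 : Fin 2) ++ 1 :: List.replicate 0 0 := by simp
          rw [this]
          exact h2
      · obtain ⟨hl1, hl2, hl3⟩ := hl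
        have hl2' : 2 ≤ l := hTtwo l ⟨hl1, hl2, hl3⟩
        have hgp : 1 ≤ gap G l := gap_pos' hG l hl1
        refine ⟨by simp only [hf]; simp; omega, ?_, ?_⟩
        · -- `f l ++ [0]` is a factor
          obtain ⟨M, hM1, hM2⟩ := gap_unbounded' hG hinj (n + 1)
          have hg1 : n + 2 ≤ gap G M := by have := hM2 M le_rfl; omega
          have hg2 : n + 2 ≤ gap G (M + 1) := by have := hM2 (M + 1) (by omega); omega
          obtain ⟨h1, h2⟩ := key_occ hG M (n - gap G l) (gap G l - 1 + 1) hM1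
            (by omega) (by omega)
          refine ⟨G M - (n - gap G l), h1, ?_⟩
          have : f l ++ [0] = List.replicate (n - gap G l) (0 : Fin 2) ++
              1 :: List.replicate (gap G l - 1 + 1) 0 := by
            simp only [hf]
            simp [List.replicate_succ']
          rw [this]
          exact h2
        · -- `f l ++ [1]` is a factor
          have hm : 1 ≤ l - 1 := by omega
          have hsl : n - gap G l + 1 ≤ gap G (l - 1) := by omega
          have := occ_Z1Z1 hG (l - 1) (n - gap G l) hm hsl
          rw [Nat.sub_add_cancel hl1] at this
          have heq : f l ++ [1] = List.replicate (n - gap G l) (0 : Fin 2) ++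
              1 :: (List.replicate (gap G l - 1) (0 : Fin 2) ++ [1]) := by
            simp only [hf]; simp
          rw [heq]
          exact this
  -- cardinality computation
  have hTfin : T.Finite := by
    apply Set.Finite.of_finite_image (f := gap G)
    · apply Set.Finite.subset (Set.finite_Icc 1 n)
      rintro x ⟨l, hl, rfl⟩
      exact ⟨gap_pos' hG l hl.1, hl.2.1⟩
    · intro a ha b hb hab
      exact hinj a b ha.1 hb.1 hab
  have hnotmem : List.replicate n (0 : Fin 2) ∉ f '' T := by
    rintro ⟨l, hl, heq⟩
    have h1 : (1 : Fin 2) ∈ f l := by simp only [hf]; simp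
    rw [heq, List.mem_replicate] at h1
    exact absurd h1.2 (by decide)
  have hinjOn : Set.InjOn f T := by
    intro l1 hl1 l2 hl2 heq
    simp only [hf] at heq
    obtain ⟨h1, h2⟩ := repl_one_inj _ _ _ _ heq
    have h3 := congrArg List.length h2
    simp only [List.length_replicate] at h3
    have hg1 : 1 ≤ gap G l1 := gap_pos' hG l1 hl1.1
    have hg2 : 1 ≤ gap G l2 := gap_pos' hG l2 hl2.1
    exact hinj l1 l2 hl1.1 hl2.1 (by omega)
  rw [hSeq, Set.ncard_insert_of_notMem hnotmem (hTfin.image f),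
    Set.ncard_image_of_injOn hinjOn]
  omega
end

section
/- Let w be the infinite binary word with 1-distribution function G(n) = n², so its gap function is g(n) = 2n - 1. Then the subword complexity of w satisfies the recurrence f_w(n+4) = f_w(n) + n + 4 for all n ≥ 1. -/
namespace Stmt7Aux


def Bf (n : ℕ) : Finset (ℕ × ℕ) :=
  (Finset.range n ×ˢ Finset.range n).filter
    (fun c => 1 ≤ c.1 ∧ c.2 + 2 ≤ 2 * c.1 ∧ 2 * c.1 + 2 + c.2 ≤ n)

def Cf (n : ℕ) : Finset (ℕ × ℕ) :=
  ((Finset.range (n+1)).image (fun a => ((0:ℕ), a))) ∪ Bf n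

lemma mem_Bf {n : ℕ} {c : ℕ × ℕ} :
    c ∈ Bf n ↔ 1 ≤ c.1 ∧ c.2 + 2 ≤ 2 * c.1 ∧ 2 * c.1 + 2 + c.2 ≤ n := by
  simp only [Bf, Finset.mem_filter, Finset.mem_product, Finset.mem_range]
  omega

lemma mem_Cf {n : ℕ} {c : ℕ × ℕ} :
    c ∈ Cf n ↔ (c.1 = 0 ∧ c.2 ≤ n) ∨ (1 ≤ c.1 ∧ c.2 + 2 ≤ 2 * c.1 ∧ 2 * c.1 + 2 + c.2 ≤ n) := by
  obtain ⟨k, a⟩ := c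
  simp only [Cf, Finset.mem_union, Finset.mem_image, Finset.mem_range, mem_Bf,
    Prod.mk.injEq]
  constructor
  · rintro (⟨b, hb, rfl, rfl⟩ | h)
    · exact Or.inl ⟨rfl, by omega⟩
    · exact Or.inr h
  · rintro (⟨rfl, h2⟩ | h)
    · exact Or.inl ⟨a, by omega, rfl, rfl⟩
    · exact Or.inr h

def cpos (n : ℕ) (c : ℕ × ℕ) : ℕ :=
  if c.1 = 0 then (if c.2 = n then n^2 + 1 else n^2 - c.2) else c.1^2 - c.2

lemma cpos_zn (n : ℕ) : cpos n (0, n) = n^2 + 1 := by simp [cpos]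

lemma cpos_za {n a : ℕ} (h : a ≠ n) : cpos n (0, a) = n^2 - a := by simp [cpos, h]

lemma cpos_pa {n k a : ℕ} (h : k ≠ 0) : cpos n (k, a) = k^2 - a := by simp [cpos, h]

def F (w : ℕ → Fin 2) (n : ℕ) (c : ℕ × ℕ) : List (Fin 2) :=
  (List.range n).map (fun j => w (cpos n c + j))

variable {w : ℕ → Fin 2}

lemma fin2_cases (x : Fin 2) : x = 0 ∨ x = 1 := by fin_cases x <;> simp

lemma eq_zero_of_ne_one {x : Fin 2} (h : x ≠ 1) : x = 0 :=
  (fin2_cases x).resolve_right h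

lemma sq_lt_sq' {a b : ℕ} (h : a^2 < b^2) : a < b := by
  by_contra hc
  exact absurd (Nat.pow_le_pow_left (le_of_not_gt hc) 2) (not_le.mpr h)

lemma w_sq (hG : OneDistrib w (fun n => n ^ 2)) {k : ℕ} (hk : 1 ≤ k) : w (k ^ 2) = 1 := by
  have h1 : 1 ≤ k ^ 2 := Nat.one_le_pow _ _ (by omega)
  exact (hG.2.2 (k ^ 2) h1).2 ⟨k, hk, rfl⟩

lemma w_between (hG : OneDistrib w (fun n => n ^ 2)) (k : ℕ) {p : ℕ}
    (h1 : k ^ 2 < p) (h2 : p < (k + 1) ^ 2) : w p = 0 := by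
  apply eq_zero_of_ne_one
  intro h
  obtain ⟨i, hi, hip⟩ := (hG.2.2 p (by omega)).1 h
  have hip' : i ^ 2 = p := hip
  have ha : k < i := sq_lt_sq' (by omega)
  have hb : i < k + 1 := sq_lt_sq' (by omega)
  omega

lemma prof_zero (hG : OneDistrib w (fun n => n ^ 2)) {n j : ℕ} (hj : j < n) :
    w (n ^ 2 + 1 + j) = 0 := by
  have e : (n + 1) ^ 2 = n ^ 2 + 2 * n + 1 := by ring
  exact w_between hG n (by omega) (by omega)

lemma prof_one (hG : OneDistrib w (fun n => n ^ 2)) {n a j : ℕ} (ha : a < n) (hj : j < n) :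
    w (n ^ 2 - a + j) = if j = a then 1 else 0 := by
  obtain ⟨m, rfl⟩ : ∃ m, n = m + 1 := ⟨n - 1, by omega⟩
  have e1 : (m + 1) ^ 2 = m ^ 2 + 2 * m + 1 := by ring
  have e2 : (m + 2) ^ 2 = m ^ 2 + 4 * m + 4 := by ring
  rcases lt_trichotomy j a with h | rfl | h
  · rw [if_neg (by omega)]
    exact w_between hG m (by omega) (by omega)
  · rw [if_pos rfl]
    have e3 : (m + 1) ^ 2 - j + j = (m + 1) ^ 2 := by omega
    rw [e3]; exact w_sq hG (by omega)
  · rw [if_neg (by omega)]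
    have e3 : (m + 1 + 1) ^ 2 = (m + 2) ^ 2 := by ring
    refine w_between hG (m + 1) (by omega) (by rw [e3]; omega)

lemma prof_two_first (hG : OneDistrib w (fun n => n ^ 2)) {k a j : ℕ} (hk : 1 ≤ k)
    (hak : a + 2 ≤ 2 * k) (hj : j < a) : w (k ^ 2 - a + j) = 0 := by
  obtain ⟨m, rfl⟩ : ∃ m, k = m + 1 := ⟨k - 1, by omega⟩
  have e1 : (m + 1) ^ 2 = m ^ 2 + 2 * m + 1 := by ring
  exact w_between hG m (by omega) (by omega)

lemma prof_two_at (hG : OneDistrib w (fun n => n ^ 2)) {k a : ℕ} (hk : 1 ≤ k)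
    (hak : a + 2 ≤ 2 * k) : w (k ^ 2 - a + a) = 1 := by
  obtain ⟨m, rfl⟩ : ∃ m, k = m + 1 := ⟨k - 1, by omega⟩
  have e1 : (m + 1) ^ 2 = m ^ 2 + 2 * m + 1 := by ring
  have e3 : (m + 1) ^ 2 - a + a = (m + 1) ^ 2 := by omega
  rw [e3]; exact w_sq hG (by omega)

lemma prof_two_mid (hG : OneDistrib w (fun n => n ^ 2)) {k a j : ℕ} (hk : 1 ≤ k)
    (hak : a + 2 ≤ 2 * k) (h1 : a < j) (h2 : j < a + 2 * k + 1) :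
    w (k ^ 2 - a + j) = 0 := by
  obtain ⟨m, rfl⟩ : ∃ m, k = m + 1 := ⟨k - 1, by omega⟩
  have e1 : (m + 1) ^ 2 = m ^ 2 + 2 * m + 1 := by ring
  have e2 : (m + 1 + 1) ^ 2 = m ^ 2 + 4 * m + 4 := by ring
  exact w_between hG (m + 1) (by omega) (by omega)

lemma prof_two_snd (hG : OneDistrib w (fun n => n ^ 2)) {k a : ℕ} (hk : 1 ≤ k)
    (hak : a + 2 ≤ 2 * k) : w (k ^ 2 - a + (a + 2 * k + 1)) = 1 := by
  obtain ⟨m, rfl⟩ : ∃ m, k = m + 1 := ⟨k - 1, by omega⟩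
  have e1 : (m + 1) ^ 2 = m ^ 2 + 2 * m + 1 := by ring
  have e2 : (m + 2) ^ 2 = m ^ 2 + 4 * m + 4 := by ring
  have e3 : (m + 1) ^ 2 - a + (a + 2 * (m + 1) + 1) = (m + 2) ^ 2 := by omega
  rw [e3]; exact w_sq hG (by omega)

lemma window_congr {n i i' : ℕ} (h : ∀ j < n, w (i + j) = w (i' + j)) :
    (List.range n).map (fun j => w (i + j)) = (List.range n).map (fun j => w (i' + j)) :=
  List.map_congr_left (fun a ha => h a (List.mem_range.mp ha))

lemma cover (hG : OneDistrib w (fun n => n ^ 2)) {n : ℕ} (hn : 1 ≤ n) {u : List (Fin 2)}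
    (hlen : u.length = n) (hfac : IsFactor w u) : ∃ c ∈ Cf n, F w n c = u := by
  obtain ⟨i, hi, hFA⟩ := hfac
  rw [FactorAt, hlen] at hFA
  by_cases hone : ∃ j, j < n ∧ w (i + j) = 1
  case neg =>
    refine ⟨(0, n), mem_Cf.mpr (Or.inl ⟨rfl, le_refl n⟩), ?_⟩
    rw [hFA]
    have hcp : cpos n (0, n) = n ^ 2 + 1 := cpos_zn n
    unfold F
    rw [hcp]
    apply window_congr
    intro j hj
    rw [prof_zero hG hj, eq_comm]
    exact eq_zero_of_ne_one (fun h => hone ⟨j, hj, h⟩)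
  case pos =>
    have haP : Nat.find hone < n ∧ w (i + Nat.find hone) = 1 := Nat.find_spec hone
    set a := Nat.find hone with hadef
    have hamin : ∀ j, j < a → ¬(j < n ∧ w (i + j) = 1) := fun j hj => Nat.find_min hone hj
    obtain ⟨K, hK1, hK2⟩ := (hG.2.2 (i + a) (by omega)).1 haP.2
    have hK2' : K ^ 2 = i + a := hK2
    by_cases htwo : ∃ j, a < j ∧ j < n ∧ w (i + j) = 1
    case neg =>
      refine ⟨(0, a), mem_Cf.mpr (Or.inl ⟨rfl, by omega⟩), ?_⟩
      rw [hFA]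
      have hcp : cpos n (0, a) = n ^ 2 - a := cpos_za (by omega)
      unfold F
      rw [hcp]
      apply window_congr
      intro j hj
      rw [prof_one hG haP.1 hj]
      by_cases hja : j = a
      · subst hja; rw [if_pos rfl]; exact haP.2.symm
      · rw [if_neg hja]
        rw [eq_comm]
        apply eq_zero_of_ne_one
        intro h
        rcases lt_or_gt_of_ne hja with hlt | hgt
        · exact hamin j hlt ⟨hj, h⟩
        · exact htwo ⟨j, hgt, hj, h⟩
    case pos =>
      have ha'P : a < Nat.find htwo ∧ Nat.find htwo < n ∧ w (i + Nat.find htwo) = 1 :=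
        Nat.find_spec htwo
      set a' := Nat.find htwo with ha'def
      have ha'min : ∀ j, j < a' → ¬(a < j ∧ j < n ∧ w (i + j) = 1) :=
        fun j hj => Nat.find_min htwo hj
      obtain ⟨M, hM1, hM2⟩ := (hG.2.2 (i + a') (by omega)).1 ha'P.2.2
      have hM2' : M ^ 2 = i + a' := hM2
      have hKM : K < M := sq_lt_sq' (by omega)
      have hKe : (K + 1) ^ 2 = K ^ 2 + 2 * K + 1 := by ring
      have hM : M = K + 1 := by
        by_contra hne
        have hKM2 : K + 1 < M := by omega
        have hlt : (K + 1) ^ 2 < M ^ 2 := Nat.pow_lt_pow_left hKM2 two_ne_zero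
        have hti : i + ((K + 1) ^ 2 - i) = (K + 1) ^ 2 := by omega
        have hw1 : w (i + ((K + 1) ^ 2 - i)) = 1 := by rw [hti]; exact w_sq hG (by omega)
        exact ha'min ((K + 1) ^ 2 - i) (by omega) ⟨by omega, by omega, hw1⟩
      subst hM
      have ha'e : a' = a + 2 * K + 1 := by omega
      have hcon : a + 2 ≤ 2 * K := by
        by_contra hc
        by_cases hK1' : K = 1
        · subst hK1'
          norm_num at hK2'
          omega
        · have hKK : 2 ≤ K := by omega
          obtain ⟨m, rfl⟩ : ∃ m, K = m + 2 := ⟨K - 2, by omega⟩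
          have f1 : (m + 1) ^ 2 = m ^ 2 + 2 * m + 1 := by ring
          have f2 : (m + 2) ^ 2 = m ^ 2 + 4 * m + 4 := by ring
          have hsi : i + ((m + 1) ^ 2 - i) = (m + 1) ^ 2 := by omega
          have hw1 : w (i + ((m + 1) ^ 2 - i)) = 1 := by rw [hsi]; exact w_sq hG (by omega)
          exact hamin ((m + 1) ^ 2 - i) (by omega) ⟨by omega, hw1⟩
      refine ⟨(K, a), mem_Cf.mpr (Or.inr ⟨hK1, hcon, by omega⟩), ?_⟩
      rw [hFA]
      have hcp : cpos n (K, a) = i := by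
        rw [cpos_pa (by omega : K ≠ 0)]
        omega
      unfold F
      rw [hcp]


lemma F_get {n : ℕ} {c c' : ℕ × ℕ} (h : F w n c = F w n c') {j : ℕ} (hj : j < n) :
    w (cpos n c + j) = w (cpos n c' + j) := by
  have h2 := congrArg (fun l => l[j]?) h
  simp only [F, List.getElem?_map, List.getElem?_range hj, Option.map_some] at h2
  exact Option.some.inj h2

lemma helper_ZO (hG : OneDistrib w (fun n => n ^ 2)) {n a' : ℕ} (ha' : a' < n)
    (h : ∀ j < n, w (n^2 + 1 + j) = w (n^2 - a' + j)) : False := by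
  have h1 := h a' ha'
  rw [prof_zero hG ha', prof_one hG ha' ha', if_pos rfl] at h1
  exact absurd h1 (by decide)

lemma helper_ZT (hG : OneDistrib w (fun n => n ^ 2)) {n k' a' : ℕ} (hk' : 1 ≤ k')
    (hak' : a' + 2 ≤ 2 * k') (hs' : 2 * k' + 2 + a' ≤ n)
    (h : ∀ j < n, w (n^2 + 1 + j) = w (k'^2 - a' + j)) : False := by
  have h1 := h a' (by omega)
  rw [prof_zero hG (by omega), prof_two_at hG hk' hak'] at h1
  exact absurd h1 (by decide)

lemma helper_OT (hG : OneDistrib w (fun n => n ^ 2)) {n a k' a' : ℕ} (ha : a < n)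
    (hk' : 1 ≤ k') (hak' : a' + 2 ≤ 2 * k') (hs' : 2 * k' + 2 + a' ≤ n)
    (h : ∀ j < n, w (n^2 - a + j) = w (k'^2 - a' + j)) : False := by
  have haa : a' = a := by
    have h1 := h a' (by omega)
    rw [prof_one hG ha (by omega), prof_two_at hG hk' hak'] at h1
    by_contra hne
    rw [if_neg hne] at h1
    exact absurd h1 (by decide)
  subst haa
  have h1 := h (a' + 2 * k' + 1) (by omega)
  rw [prof_one hG ha (by omega), if_neg (by omega), prof_two_snd hG hk' hak'] at h1
  exact absurd h1 (by decide)

lemma helper_OO (hG : OneDistrib w (fun n => n ^ 2)) {n a a' : ℕ} (ha : a < n) (ha' : a' < n)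
    (h : ∀ j < n, w (n^2 - a + j) = w (n^2 - a' + j)) : a = a' := by
  have h1 := h a ha
  rw [prof_one hG ha ha, prof_one hG ha' ha, if_pos rfl] at h1
  by_contra hne
  rw [if_neg hne] at h1
  exact absurd h1 (by decide)

lemma helper_TT (hG : OneDistrib w (fun n => n ^ 2)) {n k a k' a' : ℕ}
    (hk : 1 ≤ k) (hak : a + 2 ≤ 2 * k) (hs : 2 * k + 2 + a ≤ n)
    (hk' : 1 ≤ k') (hak' : a' + 2 ≤ 2 * k') (hs' : 2 * k' + 2 + a' ≤ n)
    (h : ∀ j < n, w (k^2 - a + j) = w (k'^2 - a' + j)) : k = k' ∧ a = a' := by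
  have haa : a = a' := by
    rcases lt_trichotomy a a' with hlt | he | hgt
    · have h1 := h a (by omega)
      rw [prof_two_at hG hk hak, prof_two_first hG hk' hak' hlt] at h1
      exact absurd h1 (by decide)
    · exact he
    · have h1 := h a' (by omega)
      rw [prof_two_first hG hk hak hgt, prof_two_at hG hk' hak'] at h1
      exact absurd h1.symm (by decide)
  subst haa
  refine ⟨?_, rfl⟩
  rcases lt_trichotomy k k' with hlt | he | hgt
  · have h1 := h (a + 2 * k + 1) (by omega)
    rw [prof_two_snd hG hk hak, prof_two_mid hG hk' hak' (by omega) (by omega)] at h1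
    exact absurd h1 (by decide)
  · exact he
  · have h1 := h (a + 2 * k' + 1) (by omega)
    rw [prof_two_mid hG hk hak (by omega) (by omega), prof_two_snd hG hk' hak'] at h1
    exact absurd h1.symm (by decide)

lemma Finj (hG : OneDistrib w (fun n => n ^ 2)) {n : ℕ} :
    ∀ c ∈ Cf n, ∀ c' ∈ Cf n, F w n c = F w n c' → c = c' := by
  intro c hc c' hc' heq
  obtain ⟨k, a⟩ := c
  obtain ⟨k', a'⟩ := c'
  have hpt : ∀ j < n, w (cpos n (k, a) + j) = w (cpos n (k', a') + j) :=
    fun j hj => F_get heq hj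
  rcases mem_Cf.mp hc with ⟨hk0, ha⟩ | ⟨hk1, hak, hs⟩ <;>
    rcases mem_Cf.mp hc' with ⟨hk0', ha'⟩ | ⟨hk1', hak', hs'⟩
  · -- zero-type vs zero-type
    obtain rfl : k = 0 := hk0
    obtain rfl : k' = 0 := hk0'
    simp only at ha ha'
    by_cases han : a = n <;> by_cases han' : a' = n
    · rw [han, han']
    · subst han
      rw [cpos_zn] at hpt
      rw [cpos_za han'] at hpt
      exact absurd (helper_ZO hG (by omega) hpt) not_false
    · subst han'
      rw [cpos_zn] at hpt
      rw [cpos_za han] at hpt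
      exact absurd (helper_ZO hG (by omega) (fun j hj => (hpt j hj).symm)) not_false
    · rw [cpos_za han, cpos_za han'] at hpt
      rw [helper_OO hG (by omega) (by omega) hpt]
  · obtain rfl : k = 0 := hk0
    simp only at ha hk1' hak' hs'
    rw [cpos_pa (by omega : k' ≠ 0)] at hpt
    by_cases han : a = n
    · subst han
      rw [cpos_zn] at hpt
      exact absurd (helper_ZT hG hk1' hak' hs' hpt) not_false
    · rw [cpos_za han] at hpt
      exact absurd (helper_OT hG (by omega) hk1' hak' hs' hpt) not_false
  · obtain rfl : k' = 0 := hk0'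
    simp only at ha' hk1 hak hs
    rw [cpos_pa (by omega : k ≠ 0)] at hpt
    by_cases han' : a' = n
    · subst han'
      rw [cpos_zn] at hpt
      exact absurd (helper_ZT hG hk1 hak hs (fun j hj => (hpt j hj).symm)) not_false
    · rw [cpos_za han'] at hpt
      exact absurd (helper_OT hG (by omega) hk1 hak hs (fun j hj => (hpt j hj).symm)) not_false
  · simp only at hk1 hak hs hk1' hak' hs'
    rw [cpos_pa (by omega : k ≠ 0), cpos_pa (by omega : k' ≠ 0)] at hpt
    obtain ⟨h1, h2⟩ := helper_TT hG hk1 hak hs hk1' hak' hs' hpt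
    rw [h1, h2]

def sliceF (c : ℕ) : Finset (ℕ × ℕ) :=
  (Finset.Icc ((c+3)/4) ((c-2)/2)).image (fun k => (k, c - 2 - 2*k))

lemma mem_sliceF {c : ℕ} {p : ℕ × ℕ} (hc : 2 ≤ c) :
    p ∈ sliceF c ↔ 1 ≤ p.1 ∧ p.2 + 2 ≤ 2*p.1 ∧ 2*p.1 + 2 + p.2 = c := by
  obtain ⟨k, a⟩ := p
  simp only [sliceF, Finset.mem_image, Finset.mem_Icc, Prod.mk.injEq]
  constructor
  · rintro ⟨j, ⟨h1, h2⟩, rfl, rfl⟩; omega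
  · rintro ⟨h1, h2, h3⟩; exact ⟨k, ⟨by omega, by omega⟩, rfl, by omega⟩

lemma card_sliceF (c : ℕ) : (sliceF c).card = (c-2)/2 + 1 - (c+3)/4 := by
  rw [sliceF, Finset.card_image_of_injective _ (fun x y h => ((Prod.mk.injEq _ _ _ _).mp h).1),
    Nat.card_Icc]

set_option maxHeartbeats 1600000 in
lemma Bf_card {n : ℕ} (hn : 1 ≤ n) : (Bf (n+4)).card = (Bf n).card + n := by
  have e1 : (2:ℕ) ≤ n+1 := by omega
  have e2 : (2:ℕ) ≤ n+2 := by omega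
  have e3 : (2:ℕ) ≤ n+3 := by omega
  have e4 : (2:ℕ) ≤ n+4 := by omega
  have h1 : Bf (n+4) = ((Bf n ∪ sliceF (n+1)) ∪ sliceF (n+2)) ∪ (sliceF (n+3) ∪ sliceF (n+4)) := by
    apply Finset.ext
    intro p
    simp only [Finset.mem_union, mem_Bf, mem_sliceF e1, mem_sliceF e2, mem_sliceF e3,
      mem_sliceF e4]
    omega
  have d1 : Disjoint (Bf n) (sliceF (n+1)) := by
    rw [Finset.disjoint_left]; intro p h h'
    rw [mem_Bf] at h; rw [mem_sliceF e1] at h'; omega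
  have d2 : Disjoint (Bf n ∪ sliceF (n+1)) (sliceF (n+2)) := by
    rw [Finset.disjoint_left]; intro p h h'
    rw [Finset.mem_union, mem_Bf, mem_sliceF e1] at h; rw [mem_sliceF e2] at h'; omega
  have d3 : Disjoint (sliceF (n+3)) (sliceF (n+4)) := by
    rw [Finset.disjoint_left]; intro p h h'
    rw [mem_sliceF e3] at h; rw [mem_sliceF e4] at h'; omega
  have d4 : Disjoint ((Bf n ∪ sliceF (n+1)) ∪ sliceF (n+2)) (sliceF (n+3) ∪ sliceF (n+4)) := by
    rw [Finset.disjoint_left]; intro p h h'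
    rw [Finset.mem_union, Finset.mem_union, mem_Bf, mem_sliceF e1, mem_sliceF e2] at h
    rw [Finset.mem_union, mem_sliceF e3, mem_sliceF e4] at h'; omega
  rw [h1, Finset.card_union_of_disjoint d4, Finset.card_union_of_disjoint d2,
    Finset.card_union_of_disjoint d1, Finset.card_union_of_disjoint d3,
    card_sliceF, card_sliceF, card_sliceF, card_sliceF]
  obtain ⟨q, r, hr, rfl⟩ : ∃ q r, (r = 1 ∨ r = 2 ∨ r = 3 ∨ r = 4) ∧ n = 4*q + r :=
    ⟨(n-1)/4, (n-1)%4+1, by omega, by omega⟩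
  rcases hr with rfl|rfl|rfl|rfl <;> omega

lemma Cf_card (n : ℕ) : (Cf n).card = n + 1 + (Bf n).card := by
  have hd : Disjoint ((Finset.range (n+1)).image (fun a => ((0:ℕ), a))) (Bf n) := by
    rw [Finset.disjoint_left]; intro p h h'
    simp only [Finset.mem_image, Finset.mem_range] at h
    rw [mem_Bf] at h'
    obtain ⟨b, _, rfl⟩ := h
    omega
  rw [Cf, Finset.card_union_of_disjoint hd,
    Finset.card_image_of_injective _ (fun x y h => ((Prod.mk.injEq _ _ _ _).mp h).2),
    Finset.card_range]


lemma cpos_ge_one {n : ℕ} (hn : 1 ≤ n) {c : ℕ × ℕ} (hc : c ∈ Cf n) : 1 ≤ cpos n c := by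
  obtain ⟨k, a⟩ := c
  have hns : n ≤ n ^ 2 := Nat.le_self_pow two_ne_zero n
  rcases mem_Cf.mp hc with ⟨hk0, ha⟩ | ⟨hk1, hak, hs⟩
  · obtain rfl : k = 0 := hk0
    simp only at ha
    by_cases han : a = n
    · subst han; rw [cpos_zn]; omega
    · rw [cpos_za han]; omega
  · simp only at hk1 hak hs
    rw [cpos_pa (by omega : k ≠ 0)]
    obtain ⟨m, rfl⟩ : ∃ m, k = m + 1 := ⟨k - 1, by omega⟩
    have e1 : (m + 1) ^ 2 = m ^ 2 + 2 * m + 1 := by ring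
    omega

lemma F_mem {n : ℕ} (hn : 1 ≤ n) {c : ℕ × ℕ} (hc : c ∈ Cf n) :
    (F w n c).length = n ∧ IsFactor w (F w n c) := by
  have hlen : (F w n c).length = n := by simp [F]
  refine ⟨hlen, ⟨cpos n c, cpos_ge_one hn hc, ?_⟩⟩
  rw [FactorAt, hlen]
  rfl

lemma factorSet_eq (hG : OneDistrib w (fun n => n ^ 2)) {n : ℕ} (hn : 1 ≤ n) :
    {u : List (Fin 2) | u.length = n ∧ IsFactor w u} = F w n '' ↑(Cf n) := by
  ext u
  simp only [Set.mem_setOf_eq, Set.mem_image, Finset.mem_coe]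
  constructor
  · rintro ⟨hlen, hfac⟩
    obtain ⟨c, hc, hFc⟩ := cover hG hn hlen hfac
    exact ⟨c, hc, hFc⟩
  · rintro ⟨c, hc, rfl⟩
    exact F_mem hn hc

lemma complexity_eq (hG : OneDistrib w (fun n => n ^ 2)) {n : ℕ} (hn : 1 ≤ n) :
    complexity w n = n + 1 + (Bf n).card := by
  have hinj : Set.InjOn (F w n) ↑(Cf n) := fun c hc c' hc' h => Finj hG c hc c' hc' h
  rw [complexity, factorSet_eq hG hn, Set.ncard_image_of_injOn hinj,
    Set.ncard_coe_finset, Cf_card]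

end Stmt7Aux

theorem stmt7 (w : ℕ → Fin 2) (hG : OneDistrib w (fun n => n ^ 2)) (n : ℕ) (hn : 1 ≤ n) :
    complexity w (n + 4) = complexity w n + n + 4 := by
  rw [Stmt7Aux.complexity_eq hG (by omega : 1 ≤ n + 4), Stmt7Aux.complexity_eq hG hn,
    Stmt7Aux.Bf_card hn]
  omega
end

section
/- Let w be an infinite binary word with injective gap function g. Then the first difference of the subword complexity satisfies 1 ≤ f_w(n+1) - f_w(n) ≤ n + 1 for all n ≥ 1. -/
/-!
Every factor of `w` extends to the right, so a factor of length `n + 1` is a factor `u` of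
length `n` followed by a letter, and `u` contributes two such factors exactly when it is right
special. Hence `f_w (n + 1) - f_w n` is the number of right special factors of length `n`.
Since the gaps are injective they are unbounded, and a gap longer than `n + 1` shows that `0ⁿ`
is right special. Conversely, two `1`s in a factor `u` pin down the occurrence of `u`: the first
two consecutive `1`s of `u` fall on consecutive `1`s of `w`, whose gap occurs only once. A right
special factor has two distinct occurrences, so it contains at most one `1`, and there are only
`n + 1` such words of length `n`.
-/

open Set

section Factors

variable {w : ℕ → Fin 2} {i : ℕ} {u : List (Fin 2)} {b : Fin 2}

theorem factorAt_iff_getElem : FactorAt w i u ↔ ∀ k (hk : k < u.length), u[k] = w (i + k) := by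
  unfold FactorAt
  constructor
  · intro h k hk
    rw [List.getElem_of_eq h hk]
    simp
  · intro h
    exact List.ext_getElem (by simp) fun k hk _ => by simp [h k hk]

theorem factorAt_append_singleton_iff :
    FactorAt w i (u ++ [b]) ↔ FactorAt w i u ∧ w (i + u.length) = b := by
  simp only [factorAt_iff_getElem, List.length_append, List.length_singleton]
  constructor
  · intro h
    refine ⟨fun k hk => ?_, ?_⟩
    · simpa [List.getElem_append_left hk] using h k (by omega)
    · simpa using (h u.length (by omega)).symm
  · rintro ⟨hu, rfl⟩ k hk
    rcases (Nat.lt_succ_iff.1 hk).lt_or_eq with hk | rfl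
    · simpa [List.getElem_append_left hk] using hu k hk
    · simp

theorem factorAt_replicate_iff {m : ℕ} :
    FactorAt w i (List.replicate m b) ↔ ∀ k < m, w (i + k) = b := by
  simp [factorAt_iff_getElem, eq_comm]

theorem FactorAt.apply_add_eq {i' : ℕ} (h : FactorAt w i u) (h' : FactorAt w i' u) {k : ℕ}
    (hk : k < u.length) : w (i + k) = w (i' + k) := by
  rw [factorAt_iff_getElem] at h h'
  rw [← h k hk, h' k hk]

theorem IsFactor.of_append_singleton (h : IsFactor w (u ++ [b])) : IsFactor w u :=
  let ⟨i, hi, hu⟩ := h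
  ⟨i, hi, (factorAt_append_singleton_iff.1 hu).1⟩

theorem IsFactor.exists_append_singleton (h : IsFactor w u) : ∃ b, IsFactor w (u ++ [b]) :=
  let ⟨i, hi, hu⟩ := h
  ⟨w (i + u.length), i, hi, factorAt_append_singleton_iff.2 ⟨hu, rfl⟩⟩

theorem complexity_succ (w : ℕ → Fin 2) (n : ℕ) :
    complexity w (n + 1) =
      complexity w n + {u : List (Fin 2) | u.length = n ∧ RightSpecial w u}.ncard := by
  set X : Fin 2 → Set (List (Fin 2)) := fun b => {u | u.length = n ∧ IsFactor w (u ++ [b])}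
  have hfin (b : Fin 2) : (X b).Finite :=
    (List.finite_length_eq _ n).subset fun u hu => hu.1
  have hsplit : {u : List (Fin 2) | u.length = n + 1 ∧ IsFactor w u} =
      (· ++ [0]) '' X 0 ∪ (· ++ [1]) '' X 1 := by
    ext u
    constructor
    · rintro ⟨hlen, hu⟩
      have hne : u ≠ [] := by rintro rfl; simp at hlen
      rw [← List.dropLast_append_getLast hne] at hu ⊢
      have hv : u.dropLast.length = n := by simp [hlen]
      obtain h | h : u.getLast hne = 0 ∨ u.getLast hne = 1 := by omega
      · rw [h] at hu ⊢
        exact Or.inl ⟨_, ⟨hv, hu⟩, rfl⟩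
      · rw [h] at hu ⊢
        exact Or.inr ⟨_, ⟨hv, hu⟩, rfl⟩
    · rintro (⟨v, ⟨hv, hf⟩, rfl⟩ | ⟨v, ⟨hv, hf⟩, rfl⟩) <;> exact ⟨by simp [hv], hf⟩
  have hdisj : Disjoint ((· ++ [0]) '' X 0) ((· ++ [1]) '' X 1) := by
    rw [Set.disjoint_left]
    rintro _ ⟨v, -, rfl⟩ ⟨v', -, h⟩
    simpa using (List.append_inj' h rfl).2
  have hunion : X 0 ∪ X 1 = {u | u.length = n ∧ IsFactor w u} := by
    ext u
    constructor
    · rintro (⟨hl, hf⟩ | ⟨hl, hf⟩) <;> exact ⟨hl, hf.of_append_singleton⟩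
    · rintro ⟨hl, hf⟩
      obtain ⟨b, hb⟩ := hf.exists_append_singleton
      fin_cases b
      exacts [Or.inl ⟨hl, hb⟩, Or.inr ⟨hl, hb⟩]
  have hinter : X 0 ∩ X 1 = {u | u.length = n ∧ RightSpecial w u} := by
    ext u
    simp only [X, RightSpecial, mem_inter_iff, mem_ofPred_eq]
    tauto
  unfold complexity
  rw [hsplit, ncard_union_eq hdisj ((hfin 0).image _) ((hfin 1).image _),
    ncard_image_of_injective _ (List.append_left_injective _),
    ncard_image_of_injective _ (List.append_left_injective _),
    ← ncard_union_add_ncard_inter _ _ (hfin 0) (hfin 1), hunion, hinter]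

end Factors

theorem ncard_le_of_getElem_eq_one_unique {n : ℕ} {R : Set (List (Fin 2))}
    (hR : ∀ u ∈ R, u.length = n ∧
      ∀ p q (hp : p < u.length) (hq : q < u.length), u[p] = 1 → u[q] = 1 → p = q) :
    R.ncard ≤ n + 1 := by
  -- such a word is determined by `u.idxOf 1`, which is `u.length` when `1 ∉ u`
  have hone : ∀ u ∈ R, ∀ k (hk : k < u.length), u[k] = 1 ↔ k = u.idxOf 1 := by
    intro u hu k hk
    constructor
    · intro h
      have hlt : u.idxOf 1 < u.length := List.idxOf_lt_length_iff.2 (h ▸ List.getElem_mem hk)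
      exact (hR u hu).2 _ _ hk hlt h (List.getElem_idxOf hlt)
    · rintro rfl
      exact List.getElem_idxOf hk
  calc R.ncard ≤ (Finset.range (n + 1) : Set ℕ).ncard := by
        refine ncard_le_ncard_of_injOn (List.idxOf 1) (fun u hu => ?_) (fun u hu v hv h => ?_)
        · have := (hR u hu).1 ▸ List.idxOf_le_length (l := u) (a := 1)
          simpa using Nat.lt_succ_of_le this
        · refine List.ext_getElem ((hR u hu).1.trans (hR v hv).1.symm) fun k hk hk' => ?_
          have := (hone u hu k hk).trans ((h ▸ hone v hv k hk').symm)
          omega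
    _ = n + 1 := by simp

theorem exists_lt_gap {G : ℕ → ℕ} (hinj : ∀ i j, 1 ≤ i → 1 ≤ j → gap G i = gap G j → i = j)
    (m : ℕ) : ∃ i, 1 ≤ i ∧ m < gap G i := by
  have hinf : (gap G '' Ici 1).Infinite :=
    (Ici_infinite 1).image fun i hi j hj h => hinj i j hi hj h
  obtain ⟨_, ⟨i, hi, rfl⟩, hlt⟩ := hinf.exists_gt m
  exact ⟨i, hi, hlt⟩

namespace OneDistrib

variable {w : ℕ → Fin 2} {G : ℕ → ℕ}

theorem apply_eq_one (hG : OneDistrib w G) {j : ℕ} (hj : 1 ≤ j) : w (G j) = 1 :=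
  (hG.2.2 _ (hj.trans hG.2.1.le_apply)).2 ⟨j, hj, rfl⟩

theorem apply_eq_zero (hG : OneDistrib w G) {j p : ℕ} (h1 : G j < p) (h2 : p < G (j + 1)) :
    w p = 0 := by
  by_contra hp
  obtain ⟨k, -, rfl⟩ := (hG.2.2 p (by omega)).1 (by omega)
  have := hG.2.1.lt_iff_lt.1 h1
  have := hG.2.1.lt_iff_lt.1 h2
  omega

theorem exists_eq_of_consecutive (hG : OneDistrib w G) {a b : ℕ} (ha : 1 ≤ a) (hab : a < b)
    (hwa : w a = 1) (hwb : w b = 1) (hzero : ∀ p, a < p → p < b → w p = 0) :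
    ∃ j, G j = a ∧ G (j + 1) = b := by
  obtain ⟨j, -, rfl⟩ := (hG.2.2 a ha).1 hwa
  obtain ⟨k, -, rfl⟩ := (hG.2.2 b (by omega)).1 hwb
  refine ⟨j, rfl, ?_⟩
  rcases Nat.lt_or_ge (j + 1) k with hjk | hjk
  · have := hzero (G (j + 1)) (hG.2.1 j.lt_succ_self) (hG.2.1 hjk)
    rw [hG.apply_eq_one (by omega)] at this
    exact absurd this (by decide)
  · have : j < k := hG.2.1.lt_iff_lt.1 hab
    rw [show k = j + 1 by omega]

variable (hG : OneDistrib w G) (hinj : ∀ i j, 1 ≤ i → 1 ≤ j → gap G i = gap G j → i = j)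
include hG hinj

theorem eq_of_apply_add_eq {i i' p q : ℕ} (hi : 1 ≤ i) (hi' : 1 ≤ i') (hpq : p < q)
    (hp : w (i + p) = 1) (hq : w (i + q) = 1) (hagree : ∀ k ≤ q, w (i + k) = w (i' + k)) :
    i = i' := by
  classical
  have hex : ∃ b, p < b ∧ w (i + b) = 1 := ⟨q, hpq, hq⟩
  obtain ⟨hpb, hb⟩ := Nat.find_spec hex
  have hbq : Nat.find hex ≤ q := Nat.find_min' hex ⟨hpq, hq⟩
  have hzero : ∀ k, p < k → k < Nat.find hex → w (i + k) = 0 := fun k hpk hk => by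
    have := Nat.find_min hex hk
    omega
  have hocc (m : ℕ) (hm : 1 ≤ m) (hm' : ∀ k ≤ Nat.find hex, w (m + k) = w (i + k)) :
      ∃ j, G j = m + p ∧ G (j + 1) = m + Nat.find hex := by
    refine hG.exists_eq_of_consecutive (by omega) (by omega) ?_ ?_ fun r hr hr' => ?_
    · rw [hm' p hpb.le, hp]
    · rw [hm' _ le_rfl, hb]
    · rw [show r = m + (r - m) by omega, hm' _ (by omega)]
      exact hzero _ (by omega) (by omega)
  obtain ⟨j, hj, hj₁⟩ := hocc i hi fun _ _ => rfl
  obtain ⟨j', hj', hj₁'⟩ := hocc i' hi' fun k hk => (hagree k (hk.trans hbq)).symm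
  have : j + 1 = j' + 1 :=
    hinj _ _ (by omega) (by omega) (by simp only [gap, Nat.add_sub_cancel]; omega)
  have : j = j' := by omega
  subst this
  omega

theorem rightSpecial_replicate_zero (n : ℕ) : RightSpecial w (List.replicate n 0) := by
  obtain ⟨_ | j, hj, hgap⟩ := exists_lt_gap hinj (n + 1)
  · omega
  simp only [gap, Nat.add_sub_cancel] at hgap
  have hzero : ∀ p, G j < p → p < G (j + 1) → w p = 0 := fun _ => hG.apply_eq_zero
  refine ⟨⟨G j + 1, by omega, ?_⟩, ⟨G (j + 1) - n, by omega, ?_⟩⟩ <;>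
    rw [factorAt_append_singleton_iff, factorAt_replicate_iff, List.length_replicate]
  · exact ⟨fun k hk => hzero _ (by omega) (by omega), hzero _ (by omega) (by omega)⟩
  · refine ⟨fun k hk => hzero _ (by omega) (by omega), ?_⟩
    rw [Nat.sub_add_cancel (by omega)]
    exact hG.apply_eq_one (by omega)

theorem eq_of_rightSpecial_getElem_eq_one {u : List (Fin 2)} (hu : RightSpecial w u) {p q : ℕ}
    (hp : p < u.length) (hq : q < u.length) (h₁ : u[p] = 1) (h₂ : u[q] = 1) : p = q := by
  obtain ⟨⟨i, hi, h₀⟩, ⟨i', hi', h₀'⟩⟩ := hu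
  rw [factorAt_append_singleton_iff] at h₀ h₀'
  have hne : i ≠ i' := by
    rintro rfl
    exact absurd (h₀.2.symm.trans h₀'.2) (by decide)
  have hocc {p q : ℕ} (hq : q < u.length) (hpq : p < q) (h₁ : u[p] = 1) (h₂ : u[q] = 1) :
      i = i' := by
    have hu := factorAt_iff_getElem.1 h₀.1
    refine hG.eq_of_apply_add_eq hinj hi hi' hpq ?_ ?_ fun k hk => h₀.1.apply_add_eq h₀'.1 ?_
    · rw [← hu p (by omega), h₁]
    · rw [← hu q hq, h₂]
    · omega
  by_contra hpq
  rcases Nat.lt_or_gt_of_ne hpq with hpq | hpq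
  exacts [hne (hocc hq hpq h₁ h₂), hne (hocc hp hpq h₂ h₁)]

end OneDistrib

theorem stmt9_general (w : ℕ → Fin 2) (G : ℕ → ℕ) (hG : OneDistrib w G)
    (hinj : ∀ i j, 1 ≤ i → 1 ≤ j → gap G i = gap G j → i = j)
    (n : ℕ) :
    complexity w n + 1 ≤ complexity w (n + 1) ∧
    complexity w (n + 1) ≤ complexity w n + (n + 1) := by
  rw [complexity_succ]
  set RS := {u : List (Fin 2) | u.length = n ∧ RightSpecial w u}
  have hfin : RS.Finite := (List.finite_length_eq _ n).subset fun u hu => hu.1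
  have hpos : 0 < RS.ncard :=
    (ncard_pos hfin).2 ⟨_, List.length_replicate, hG.rightSpecial_replicate_zero hinj n⟩
  have hle : RS.ncard ≤ n + 1 := ncard_le_of_getElem_eq_one_unique fun u hu =>
    ⟨hu.1, fun _ _ hp hq => hG.eq_of_rightSpecial_getElem_eq_one hinj hu.2 hp hq⟩
  omega

theorem stmt9 (w : ℕ → Fin 2) (G : ℕ → ℕ) (hG : OneDistrib w G)
    (hinj : ∀ i j, 1 ≤ i → 1 ≤ j → gap G i = gap G j → i = j)
    (n : ℕ) (hn : 1 ≤ n) :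
    complexity w n + 1 ≤ complexity w (n + 1) ∧
    complexity w (n + 1) ≤ complexity w n + (n + 1) :=
  stmt9_general w G hG hinj n
end

section
/- Let w be an infinite binary word with strictly increasing gap function. Then for all n ≥ 1, the subword complexity satisfies n + 1 ≤ f_w(n) ≤ ⌈n/2⌉·⌊n/2⌋ + ⌈n/2⌉ + 1. -/
namespace Stmt11

lemma fin2_eq_zero {x : Fin 2} (h : x ≠ 1) : x = 0 := by
  have h2 : ∀ y : Fin 2, y ≠ 1 → y = 0 := by decide
  exact h2 x h

variable {w : ℕ → Fin 2} {G : ℕ → ℕ}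

lemma gap_lt (hg : GapIncreasing G) {i j : ℕ} (hi : 1 ≤ i) (hij : i < j) :
    gap G i < gap G j := by
  induction j with
  | zero => omega
  | succ j ih =>
    rcases Nat.lt_succ_iff_lt_or_eq.mp hij with h | h
    · exact (ih h).trans (hg j (by omega))
    · subst h; exact hg i hi

lemma gap_inj (hg : GapIncreasing G) {i j : ℕ} (hi : 1 ≤ i) (hj : 1 ≤ j)
    (h : gap G i = gap G j) : i = j := by
  rcases lt_trichotomy i j with hlt | he | hlt
  · exact absurd h (Nat.ne_of_lt (gap_lt hg hi hlt))
  · exact he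
  · exact absurd h.symm (Nat.ne_of_lt (gap_lt hg hj hlt))

lemma gap_ge (hG : OneDistrib w G) (hg : GapIncreasing G) :
    ∀ i, 1 ≤ i → i ≤ gap G i := by
  intro i hi
  induction i with
  | zero => omega
  | succ i ih =>
    rcases Nat.eq_or_lt_of_le hi with h | h
    · have h0 : G 0 = 0 := hG.1
      have h1 : G 0 < G 1 := hG.2.1 Nat.zero_lt_one
      have hi0 : i = 0 := by omega
      subst hi0
      have hg1 : gap G 1 = G 1 - G 0 := rfl
      norm_num
      omega
    · have hi1 : 1 ≤ i := by omega
      have h2 := hg i hi1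
      have h3 := ih hi1
      omega

lemma G_step (hG : OneDistrib w G) (hg : GapIncreasing G) (t : ℕ) :
    G t + t + 1 ≤ G (t + 1) := by
  have h1 := gap_ge hG hg (t + 1) (by omega)
  have h2 : G t < G (t + 1) := hG.2.1 (Nat.lt_succ_self t)
  simp only [gap, Nat.add_sub_cancel] at h1
  omega

lemma G_pos (hG : OneDistrib w G) {m : ℕ} (hm : 1 ≤ m) : 1 ≤ G m := by
  have h0 := hG.1
  have h1 : G 0 < G m := hG.2.1 hm
  omega

lemma w_one (hG : OneDistrib w G) {m : ℕ} (hm : 1 ≤ m) : w (G m) = 1 :=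
  (hG.2.2 _ (G_pos hG hm)).mpr ⟨m, hm, rfl⟩

lemma w_zero (hG : OneDistrib w G) {p : ℕ} (hp : 1 ≤ p)
    (h : ∀ m, 1 ≤ m → G m ≠ p) : w p = 0 := by
  apply fin2_eq_zero
  intro hw
  obtain ⟨m, hm, hGm⟩ := (hG.2.2 p hp).mp hw
  exact h m hm hGm

lemma w_zero_between (hG : OneDistrib w G) {t p : ℕ} (h1 : G t < p)
    (h2 : p < G (t + 2)) (h3 : p ≠ G (t + 1)) : w p = 0 := by
  apply w_zero hG (by omega)
  intro m hm hGm
  rcases le_or_gt m t with h | h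
  · have := hG.2.1.monotone h
    omega
  · rcases le_or_gt m (t + 1) with h' | h'
    · have hm1 : m = t + 1 := by omega
      subst hm1
      exact h3 hGm.symm
    · have : G (t + 2) ≤ G m := hG.2.1.monotone (by omega)
      omega


def Ft (n : ℕ) : Finset (ℕ × ℕ) :=
  (Finset.range (n + 1) ×ˢ Finset.range (n + 1)).filter
    (fun x => x.2 = 0 ∨ (x.1 + 2 ≤ x.2 ∧ x.1 + x.2 + 1 ≤ n))

lemma mem_Ft {n : ℕ} {x : ℕ × ℕ} :
    x ∈ Ft n ↔ x.1 ≤ n ∧ x.2 ≤ n ∧ (x.2 = 0 ∨ (x.1 + 2 ≤ x.2 ∧ x.1 + x.2 + 1 ≤ n)) := by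
  simp [Ft, Nat.lt_succ_iff]
  tauto

lemma card_Ft (n : ℕ) : (Ft n).card ≤ (n + 1) / 2 * (n / 2) + (n + 1) / 2 + 1 := by
  induction n with
  | zero => decide
  | succ n ih =>
    have hsub : Ft (n + 1) ⊆
        insert (n + 1, 0) (Ft n ∪ (Finset.range (n / 2)).image (fun a => (a, n - a))) := by
      rintro ⟨a, d⟩ hx
      rw [mem_Ft] at hx
      obtain ⟨ha, hd, hP⟩ := hx
      simp only [Finset.mem_insert, Finset.mem_union, mem_Ft, Finset.mem_image,
        Finset.mem_range, Prod.mk.injEq]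
      rcases hP with h0 | ⟨h1, h2⟩
      · rcases Nat.lt_or_ge a (n + 1) with h | h
        · right; left; exact ⟨by omega, by omega, Or.inl h0⟩
        · left; exact ⟨by omega, h0⟩
      · rcases Nat.lt_or_ge (a + d + 1) (n + 1) with h | h
        · right; left; exact ⟨by omega, by omega, Or.inr ⟨h1, by omega⟩⟩
        · right; right; exact ⟨a, by omega, rfl, by omega⟩
    have hc1 := Finset.card_le_card hsub
    have hc2 := Finset.card_insert_le ((n + 1, 0))
      (Ft n ∪ (Finset.range (n / 2)).image (fun a => (a, n - a)))
    have hc3 := Finset.card_union_le (Ft n) ((Finset.range (n / 2)).image (fun a => (a, n - a)))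
    have hc4 := Finset.card_image_le (s := Finset.range (n / 2)) (f := fun a => (a, n - a))
    rw [Finset.card_range] at hc4
    rcases Nat.even_or_odd n with ⟨m, hm⟩ | ⟨m, hm⟩
    · subst hm
      have e1 : (m + m + 1 + 1) / 2 = m + 1 := by omega
      have e2 : (m + m + 1) / 2 = m := by omega
      have e3 : (m + m) / 2 = m := by omega
      rw [e2, e3] at ih
      rw [e1, e2]
      rw [e3] at hc1 hc2 hc3 hc4
      have e4 : (m + 1) * m = m * m + m := by ring
      linarith
    · subst hm
      have e1 : (2 * m + 1 + 1 + 1) / 2 = m + 1 := by omega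
      have e2 : (2 * m + 1 + 1) / 2 = m + 1 := by omega
      have e3 : (2 * m + 1) / 2 = m := by omega
      rw [e2, e3] at ih
      rw [e1, e2]
      rw [e3] at hc1 hc2 hc3 hc4
      have e4 : (m + 1) * (m + 1) = (m + 1) * m + m + 1 := by ring
      linarith

open Classical in
noncomputable def Psi (G : ℕ → ℕ) (n : ℕ) (x : ℕ × ℕ) : List (Fin 2) :=
  if x.2 = 0 then (List.range n).map (fun k => if k = x.1 then (1 : Fin 2) else 0)
  else if h : ∃ j, 1 ≤ j ∧ gap G (j + 1) = x.2 then
    (List.range n).map (fun k =>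
      if ∃ m, 1 ≤ m ∧ G m + x.1 = G h.choose + k then (1 : Fin 2) else 0)
  else []

open Classical in
noncomputable def phi (w : ℕ → Fin 2) (n i : ℕ) : ℕ × ℕ :=
  if h1 : ∃ k, k < n ∧ w (i + k) = 1 then
    if h2 : ∃ k, k < n ∧ Nat.find h1 < k ∧ w (i + k) = 1 then
      (Nat.find h1, Nat.find h2 - Nat.find h1)
    else (Nat.find h1, 0)
  else (n, 0)

variable {w : ℕ → Fin 2} {G : ℕ → ℕ}

lemma phi_spec (hG : OneDistrib w G) (hg : GapIncreasing G) (n : ℕ) {i : ℕ} (hi : 1 ≤ i) :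
    phi w n i ∈ Ft n ∧ (List.range n).map (fun k => w (i + k)) = Psi G n (phi w n i) := by
  classical
  by_cases h1 : ∃ k, k < n ∧ w (i + k) = 1
  · obtain ⟨han, hwa⟩ := Nat.find_spec h1
    set a := Nat.find h1 with ha
    obtain ⟨j, hj1, hja⟩ := (hG.2.2 (i + a) (by omega)).mp hwa
    have hjprev : G (j - 1) + a < G j := by
      by_contra hcon
      push_neg at hcon
      have hj1' : 1 ≤ j - 1 := by
        rcases Nat.eq_or_lt_of_le hj1 with h | h
        · exfalso
          have h0 := hG.1
          rw [← h] at hcon hja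
          norm_num at hcon
          omega
        · omega
      have hlt : G (j - 1) < G j := hG.2.1 (by omega)
      have hw' : w (G (j - 1)) = 1 := w_one hG hj1'
      have hk' : G (j - 1) = i + (G (j - 1) - i) := by omega
      exact Nat.find_min h1 (m := G (j - 1) - i) (by omega) ⟨by omega, by rw [← hk']; exact hw'⟩
    have hgapj : a + 1 ≤ gap G j := by
      have : gap G j = G j - G (j - 1) := rfl
      omega
    by_cases h2 : ∃ k, k < n ∧ a < k ∧ w (i + k) = 1
    · obtain ⟨hcn, hac, hwc⟩ := Nat.find_spec h2
      set c := Nat.find h2 with hc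
      obtain ⟨m, hm1, hmc⟩ := (hG.2.2 (i + c) (by omega)).mp hwc
      have hmj : j < m := (hG.2.1.lt_iff_lt).mp (by omega)
      have hm2 : m = j + 1 := by
        by_contra hcon
        have hlt1 : G j < G (j + 1) := hG.2.1 (by omega)
        have hlt2 : G (j + 1) < G m := hG.2.1 (by omega)
        have hw' : w (G (j + 1)) = 1 := w_one hG (by omega)
        have hk' : G (j + 1) = i + (G (j + 1) - i) := by omega
        exact Nat.find_min h2 (m := G (j + 1) - i) (by omega)
          ⟨by omega, by omega, by rw [← hk']; exact hw'⟩
      have hgap1 : gap G (j + 1) = c - a := by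
        have : gap G (j + 1) = G (j + 1) - G j := by
          simp [gap]
        rw [this, ← hm2, hmc, hja]
        omega
      rw [phi]
      rw [dif_pos h1, dif_pos h2]
      constructor
      · rw [mem_Ft]
        have hgg := hg j hj1
        refine ⟨by omega, by omega, Or.inr ⟨by omega, by omega⟩⟩
      · have hd0 : ¬((a, c - a).2 = 0) := by simp; omega
        rw [Psi, if_neg hd0]
        have hE : ∃ j', 1 ≤ j' ∧ gap G (j' + 1) = (a, c - a).2 := ⟨j, hj1, hgap1⟩
        rw [dif_pos hE]
        have hjc : hE.choose = j := by
          obtain ⟨hc1, hc2⟩ := hE.choose_spec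
          have := gap_inj hg (show 1 ≤ hE.choose + 1 by omega) (show 1 ≤ j + 1 by omega)
            (by rw [hc2]; exact hgap1.symm)
          omega
        rw [hjc]
        rw [List.map_inj_left]
        intro k hk
        rw [List.mem_range] at hk
        by_cases hEx : ∃ m', 1 ≤ m' ∧ G m' + (a, c - a).1 = G j + k
        · rw [if_pos hEx]
          obtain ⟨m', hm'1, hm'⟩ := hEx
          simp only at hm'
          have : i + k = G m' := by omega
          rw [this]
          exact w_one hG hm'1
        · rw [if_neg hEx]
          apply fin2_eq_zero
          intro hw
          obtain ⟨m', hm'1, hGm'⟩ := (hG.2.2 (i + k) (by omega)).mp hw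
          exact hEx ⟨m', hm'1, by simp only; omega⟩
    · rw [phi, dif_pos h1, dif_neg h2]
      constructor
      · rw [mem_Ft]
        exact ⟨by omega, by omega, Or.inl rfl⟩
      · rw [Psi, if_pos rfl]
        rw [List.map_inj_left]
        intro k hk
        rw [List.mem_range] at hk
        by_cases hka : k = a
        · subst hka
          rw [if_pos rfl]
          exact hwa
        · rw [if_neg hka]
          apply fin2_eq_zero
          intro hw
          rcases Nat.lt_or_ge k a with h | h
          · exact Nat.find_min h1 h ⟨hk, hw⟩
          · exact h2 ⟨k, hk, by omega, hw⟩
  · rw [phi, dif_neg h1]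
    constructor
    · rw [mem_Ft]
      exact ⟨le_refl n, by omega, Or.inl rfl⟩
    · rw [Psi, if_pos rfl]
      rw [List.map_inj_left]
      intro k hk
      rw [List.mem_range] at hk
      rw [if_neg (by omega)]
      apply fin2_eq_zero
      intro hw
      exact h1 ⟨k, hk, hw⟩


def onew (n a : ℕ) : List (Fin 2) :=
  (List.range n).map (fun k => if k = a then (1 : Fin 2) else 0)

lemma onew_length (n a : ℕ) : (onew n a).length = n := by simp [onew]

variable {w : ℕ → Fin 2} {G : ℕ → ℕ}

lemma onew_factor (hG : OneDistrib w G) (hg : GapIncreasing G) (n : ℕ) {a : ℕ} (ha : a ≤ n) :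
    IsFactor w (onew n a) := by
  have hs1 := G_step hG hg n
  have hs2 : G (n + 1) + (n + 1) + 1 ≤ G (n + 2) := G_step hG hg (n + 1)
  have hmon : G (n + 1) ≤ G (n + 2) := hG.2.1.monotone (by omega)
  rcases Nat.lt_or_ge a n with han | han
  · -- a < n : window around G (n+1)
    refine ⟨G (n + 1) - a, by omega, ?_⟩
    have hia : G (n + 1) - a + a = G (n + 1) := by omega
    rw [FactorAt, onew_length]
    rw [onew, List.map_inj_left]
    intro k hk
    rw [List.mem_range] at hk
    by_cases hka : k = a
    · subst hka
      rw [if_pos rfl, hia]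
      exact (w_one hG (by omega)).symm
    · rw [if_neg hka]
      refine (w_zero_between hG (t := n) (by omega) (by omega) (by omega)).symm
  · -- a = n : all-zero word, window in the gap after G n
    have han' : a = n := by omega
    subst han'
    refine ⟨G a + 1, by omega, ?_⟩
    rw [FactorAt, onew_length]
    rw [onew, List.map_inj_left]
    intro k hk
    rw [List.mem_range] at hk
    rw [if_neg (by omega)]
    refine (w_zero_between hG (t := a) (by omega) (by omega) (by omega)).symm

lemma onew_inj {n : ℕ} : Set.InjOn (onew n) ↑(Finset.range (n + 1)) := by
  intro a ha b hb h
  simp only [Finset.coe_range, Set.mem_Iio] at ha hb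
  by_contra hne
  rw [onew, onew, List.map_inj_left] at h
  rcases Nat.lt_or_ge a n with h1 | h1
  · have := h a (by rw [List.mem_range]; omega)
    rw [if_pos rfl, if_neg hne] at this
    exact absurd this (by decide)
  · have hbn : b < n := by omega
    have := h b (by rw [List.mem_range]; omega)
    rw [if_pos rfl, if_neg (by omega)] at this
    exact absurd this (by decide)


end Stmt11

theorem stmt11 (w : ℕ → Fin 2) (G : ℕ → ℕ) (hG : OneDistrib w G)
    (hg : GapIncreasing G) (n : ℕ) (hn : 1 ≤ n) :
    n + 1 ≤ complexity w n ∧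
    complexity w n ≤ ((n + 1) / 2) * (n / 2) + (n + 1) / 2 + 1 := by
  classical
  have hSfin : {u : List (Fin 2) | u.length = n ∧ IsFactor w u}.Finite :=
    (List.finite_length_eq (Fin 2) n).subset (fun u hu => hu.1)
  constructor
  · have hsub : ↑((Finset.range (n + 1)).image (Stmt11.onew n)) ⊆
        {u : List (Fin 2) | u.length = n ∧ IsFactor w u} := by
      intro u hu
      rw [Finset.coe_image] at hu
      obtain ⟨a, ha, rfl⟩ := hu
      have ha' : a ≤ n := by
        simpa [Nat.lt_succ_iff] using ha
      exact ⟨Stmt11.onew_length n a, Stmt11.onew_factor hG hg n ha'⟩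
    have hcard : ((Finset.range (n + 1)).image (Stmt11.onew n)).card = n + 1 := by
      rw [Finset.card_image_of_injOn Stmt11.onew_inj, Finset.card_range]
    have h := Set.ncard_le_ncard hsub hSfin
    rw [Set.ncard_coe_finset, hcard] at h
    exact h
  · have hsub : {u : List (Fin 2) | u.length = n ∧ IsFactor w u} ⊆
        Stmt11.Psi G n '' ↑(Stmt11.Ft n) := by
      rintro u ⟨hlen, i, hi, hfac⟩
      rw [FactorAt, hlen] at hfac
      obtain ⟨hmem, heq⟩ := Stmt11.phi_spec hG hg n hi
      exact ⟨Stmt11.phi w n i, hmem, by rw [← heq]; exact hfac.symm⟩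
    calc complexity w n ≤ (Stmt11.Psi G n '' ↑(Stmt11.Ft n)).ncard :=
          Set.ncard_le_ncard hsub ((Stmt11.Ft n).finite_toSet.image _)
      _ ≤ (↑(Stmt11.Ft n) : Set (ℕ × ℕ)).ncard := Set.ncard_image_le (Stmt11.Ft n).finite_toSet
      _ = (Stmt11.Ft n).card := Set.ncard_coe_finset _
      _ ≤ _ := Stmt11.card_Ft n
end
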